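/- arXiv:2503.12639 — 8 statements merged into one kernel-verified Lean document; each statement's English description precedes it below -/
import Mathlib

section
/- Fix a ∈ ℝ, ε > 0, N ∈ ℕ, and B > b where b := √((|a| + ε²)/3). Let θ : ℝ → ℂ be Lebesgue integrable and bounded, and suppose there exist a function ψ defined on {λ ∈ ℝ : |λ| ≥ B} and a function φ holomorphic on an open subset of ℂ containing the closed set R := {z − iy : z ∈ ℝ, |z| ≥ B, 0 ≤ y ≤ ε}, such that: θ(λ) = φ(λ) + ψ(λ) for all real λ with |λ| ≥ B; there is K > 0 with |ψ(λ)| ≤ K·|λ|^(−N) for all real λ with |λ| ≥ B; and max_{y∈[0,ε]} |φ(C − iy)| → 0 as C → +∞ and as C → −∞. Then for every x ∈ ℝ and every t ≥ 0, the difference D(C) := ∫_{−C}^{C} E(λ;x,t)θ(λ) dλ − [ ∫_{−B}^{B} E(λ;x,t)θ(λ) dλ + ∫_{B}^{C} ( E(λ;x,t)ψ(λ) + E(−λ;x,t)ψ(−λ) ) dλ + ∫_{B}^{C} ( E(z−iε;x,t)φ(z−iε) + E(−z−iε;x,t)φ(−z−iε) ) dz + i∫_{0}^{ε} E(−B−iy;x,t)φ(−B−iy)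 dy − i∫_{0}^{ε} E(B−iy;x,t)φ(B−iy) dy ] tends to 0 as C → ∞. In particular, the principal-value integral lim_{C→∞} ∫_{−C}^{C} E(λ;x,t)θ(λ) dλ exists if and only if the bracketed expression has a limit as C → ∞, and then the two limits are equal. -/
/-!
For `C ≥ B`, Cauchy's theorem on the rectangles `[B, C] × [-ε, 0]` and `[-C, -B] × [-ε, 0]`
moves the `φ`-part of `∫_{B ≤ |λ| ≤ C} E θ` down to the line `Im λ = -ε`, at the cost of four
vertical sides. Those at `±B` are the ones in the bracket, so `D(C)` is exactly
`i ∫₀^ε (Eφ)(C - iy) dy - i ∫₀^ε (Eφ)(-C - iy) dy`. Since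
`|E(c - iy)| = exp(yx + ty(y² + a - 3c²))` and `B > √((|a| + ε²)/3)`, the weight is at most
`exp(ε|x|)` on these sides, so they are bounded by `ε exp(ε|x|) max_y |φ(±C - iy)| → 0`.
-/

open Complex Filter Set MeasureTheory intervalIntegral

noncomputable def E (a : ℝ) (lam : ℂ) (x t : ℝ) : ℂ :=
  Complex.exp (Complex.I * lam * x - Complex.I * (lam ^ 3 - (a : ℂ) * lam) * t)

open scoped Interval

lemma differentiable_E (a x t : ℝ) : Differentiable ℂ (fun w => E a w x t) := by
  unfold E
  fun_prop

lemma norm_E_ofReal (a x t lam : ℝ) : ‖E a lam x t‖ = 1 := by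
  rw [E, norm_exp, Real.exp_eq_one_iff]
  simp [mul_re, mul_im, ← ofReal_pow]

lemma norm_E_sub_I_mul_le {a x t c y : ℝ} (ht : 0 ≤ t) (hy : 0 ≤ y)
    (hc : y ^ 2 + a ≤ 3 * c ^ 2) : ‖E a (c - I * y) x t‖ ≤ Real.exp (y * x) := by
  have hre : (I * (c - I * y) * x - I * ((c - I * y) ^ 3 - a * (c - I * y)) * t).re
      = y * x + t * (y * (y ^ 2 + a - 3 * c ^ 2)) := by
    simp [mul_re, mul_im, pow_succ]
    ring
  rw [E, norm_exp, hre, Real.exp_le_exp]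
  nlinarith [mul_nonneg ht hy]

lemma integrable_E_mul {θ : ℝ → ℂ} (hθ : Integrable θ) (a x t : ℝ) :
    Integrable (fun lam : ℝ => E a lam x t * θ lam) :=
  hθ.bdd_mul ((differentiable_E a x t).continuous.comp continuous_ofReal).aestronglyMeasurable
    (.of_forall fun lam => (norm_E_ofReal a x t lam).le)

lemma three_mul_sq_ge_of_sqrt_lt {a ε B c : ℝ} (hB : Real.sqrt ((|a| + ε ^ 2) / 3) < B)
    (hc : B ≤ |c|) : |a| + ε ^ 2 ≤ 3 * c ^ 2 := by
  have hB0 : 0 < B := (Real.sqrt_nonneg _).trans_lt hB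
  have := (Real.sqrt_lt' hB0).1 hB
  nlinarith [sq_abs c, mul_self_le_mul_self hB0.le hc]

lemma norm_integral_E_mul_vertical_le {a x t ε c : ℝ} {φ : ℂ → ℂ} (ht : 0 ≤ t) (hε : 0 ≤ ε)
    (hc : |a| + ε ^ 2 ≤ 3 * c ^ 2) (hφ : ContinuousOn (fun y : ℝ => φ (c - I * y)) (Icc 0 ε)) :
    ‖∫ y in 0..ε, E a (c - I * y) x t * φ (c - I * y)‖
      ≤ Real.exp (ε * |x|) * sSup ((fun y : ℝ => ‖φ (c - I * y)‖) '' Icc 0 ε) * ε := by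
  have hbdd := isCompact_Icc.bddAbove_image hφ.norm
  calc _ ≤ Real.exp (ε * |x|) * sSup ((fun y : ℝ => ‖φ (c - I * y)‖) '' Icc 0 ε) * |ε - 0| := by
        refine norm_integral_le_of_norm_le_const fun y hy => ?_
        rw [uIoc_of_le hε] at hy
        have hE : ‖E a (c - I * y) x t‖ ≤ Real.exp (ε * |x|) :=
          (norm_E_sub_I_mul_le ht hy.1.le (by nlinarith [le_abs_self a, hy.2, hy.1])).trans
            (Real.exp_le_exp.2 (by nlinarith [le_abs_self x, abs_nonneg x, hy.1, hy.2]))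
        rw [norm_mul]
        exact mul_le_mul hE (le_csSup hbdd ⟨y, Ioc_subset_Icc_self hy, rfl⟩) (norm_nonneg _)
          (Real.exp_pos _).le
    _ = _ := by rw [sub_zero, abs_of_nonneg hε]

lemma tendsto_integral_E_mul_vertical {l : Filter ℝ} {a x t ε : ℝ} {φ : ℂ → ℂ}
    (ht : 0 ≤ t) (hε : 0 ≤ ε)
    (hφ : ∀ᶠ c in l, |a| + ε ^ 2 ≤ 3 * c ^ 2 ∧
      ContinuousOn (fun y : ℝ => φ (c - I * y)) (Icc 0 ε))
    (hsup : Tendsto (fun c : ℝ => sSup ((fun y : ℝ => ‖φ (c - I * y)‖) '' Icc 0 ε)) l (nhds 0)) :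
    Tendsto (fun c : ℝ => ∫ y in 0..ε, E a (c - I * y) x t * φ (c - I * y)) l (nhds 0) :=
  squeeze_zero_norm' (hφ.mono fun _ hc => norm_integral_E_mul_vertical_le ht hε hc.1 hc.2)
    (by simpa using (hsup.const_mul _).mul_const ε)

theorem IntervalIntegrable.comp_neg {G : Type*} [NormedAddCommGroup G] {g : ℝ → G} {p q : ℝ}
    (hg : IntervalIntegrable g volume (-q) (-p)) :
    IntervalIntegrable (fun u => g (-u)) volume p q := by
  simpa using (IntervalIntegrable.iff_comp_neg (f := g)).mp hg |>.symm

theorem intervalIntegral.integral_neg_self_eq_add_integral_add_comp_neg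
    {G : Type*} [NormedAddCommGroup G] [NormedSpace ℝ G] {g : ℝ → G}
    (hg : ∀ u v, IntervalIntegrable g volume u v) (B C : ℝ) :
    ∫ u in -C..C, g u = (∫ u in -B..B, g u) + ∫ u in B..C, (g u + g (-u)) := by
  rw [integral_add (hg B C) (hg (-C) (-B)).comp_neg, integral_comp_neg,
    ← integral_add_adjacent_intervals (hg (-C) B) (hg B C),
    ← integral_add_adjacent_intervals (hg (-C) (-B)) (hg (-B) B)]
  abel

lemma integral_ofReal_eq_of_differentiableOn_reProdIm {F : ℂ → ℂ} {p q ε : ℝ}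
    (hF : DifferentiableOn ℂ F ([[p, q]] ×ℂ [[-ε, 0]])) :
    ∫ u in p..q, F u = (∫ u in p..q, F (u - I * ε))
      + I * (∫ y in 0..ε, F (q - I * y)) - I * (∫ y in 0..ε, F (p - I * y)) := by
  have h : (∫ u in p..q, F (u + (-ε : ℝ) * I)) - (∫ u in p..q, F (u + (0 : ℝ) * I))
      + I • (∫ y in -ε..0, F (q + y * I)) - I • (∫ y in -ε..0, F (p + y * I)) = 0 :=
    integral_boundary_rect_eq_zero_of_differentiableOn F ⟨p, -ε⟩ ⟨q, 0⟩ hF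
  have hvert : ∀ c : ℝ, ∫ y in -ε..0, F (c + y * I) = ∫ y in 0..ε, F (c - I * y) := by
    intro c
    rw [← neg_zero, ← integral_comp_neg, neg_zero]
    simp only [ofReal_neg, neg_mul, mul_comm I, sub_eq_add_neg]
  simp only [hvert, ofReal_neg, ofReal_zero, zero_mul, add_zero, neg_mul, ← sub_eq_add_neg,
    mul_comm (ε : ℂ) I, smul_eq_mul] at h
  linear_combination -h

lemma intervalIntegrable_comp_sub_I_mul {F : ℂ → ℂ} {p q ε y : ℝ}
    (hF : ContinuousOn F ([[p, q]] ×ℂ [[-ε, 0]])) (hy : y ∈ [[0, ε]]) :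
    IntervalIntegrable (fun u : ℝ => F (u - I * y)) volume p q := by
  refine (hF.comp (by fun_prop) fun u hu => ?_).intervalIntegrable
  have : -y ∈ [[-ε, 0]] := by
    rw [mem_uIcc] at hy ⊢
    grind
  simpa [mem_reProdIm, hu] using this

lemma intervalIntegrable_comp_neg_sub_I_mul {F : ℂ → ℂ} {p q ε y : ℝ}
    (hF : ContinuousOn F ([[-q, -p]] ×ℂ [[-ε, 0]])) (hy : y ∈ [[0, ε]]) :
    IntervalIntegrable (fun u : ℝ => F (-u - I * y)) volume p q := by
  simpa using (intervalIntegrable_comp_sub_I_mul hF hy).comp_neg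

lemma integral_add_comp_neg_eq_of_differentiableOn {F : ℂ → ℂ} {B C ε : ℝ}
    (hpos : DifferentiableOn ℂ F ([[B, C]] ×ℂ [[-ε, 0]]))
    (hneg : DifferentiableOn ℂ F ([[-C, -B]] ×ℂ [[-ε, 0]])) :
    ∫ u in B..C, (F u + F (-u)) = (∫ u in B..C, (F (u - I * ε) + F (-u - I * ε)))
      + I * (∫ y in 0..ε, F (C - I * y)) - I * (∫ y in 0..ε, F (B - I * y))
      + I * (∫ y in 0..ε, F (-B - I * y)) - I * (∫ y in 0..ε, F (-C - I * y)) := by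
  have hflip : ∀ g : ℂ → ℂ, ∫ u in B..C, g (-u) = ∫ u in -C..-B, g u := fun g => by
    simpa using integral_comp_neg (a := B) (b := C) fun u : ℝ => g u
  have hpos' := hpos.continuousOn
  have hneg' := hneg.continuousOn
  have h0 : (0 : ℝ) ∈ [[0, ε]] := left_mem_uIcc
  rw [integral_add (by simpa using intervalIntegrable_comp_sub_I_mul hpos' h0)
      (by simpa using intervalIntegrable_comp_neg_sub_I_mul hneg' h0),
    integral_add (intervalIntegrable_comp_sub_I_mul hpos' right_mem_uIcc)
      (intervalIntegrable_comp_neg_sub_I_mul hneg' right_mem_uIcc),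
    hflip F, hflip fun w => F (w - I * ε),
    integral_ofReal_eq_of_differentiableOn_reProdIm hpos,
    integral_ofReal_eq_of_differentiableOn_reProdIm hneg]
  push_cast
  ring

lemma integral_neg_self_sub_shifted_contour_eq {f g : ℝ → ℂ} {F : ℂ → ℂ} {B C ε : ℝ}
    (hf : ∀ u v, IntervalIntegrable f volume u v)
    (hpos : DifferentiableOn ℂ F ([[B, C]] ×ℂ [[-ε, 0]]))
    (hneg : DifferentiableOn ℂ F ([[-C, -B]] ×ℂ [[-ε, 0]]))
    (hsplit : ∀ u ∈ [[B, C]], f u + f (-u) = g u + g (-u) + (F u + F (-u))) :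
    (∫ u in -C..C, f u) - ((∫ u in -B..B, f u) + (∫ u in B..C, (g u + g (-u)))
      + (∫ u in B..C, (F (u - I * ε) + F (-u - I * ε)))
      + I * (∫ y in 0..ε, F (-B - I * y)) - I * (∫ y in 0..ε, F (B - I * y)))
    = I * (∫ y in 0..ε, F (C - I * y)) - I * (∫ y in 0..ε, F (-C - I * y)) := by
  have hF : IntervalIntegrable (fun u : ℝ => F u + F (-u)) volume B C := by
    have h0 : (0 : ℝ) ∈ [[0, ε]] := left_mem_uIcc
    simpa using (intervalIntegrable_comp_sub_I_mul hpos.continuousOn h0).add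
      (intervalIntegrable_comp_neg_sub_I_mul hneg.continuousOn h0)
  have hfsym : IntervalIntegrable (fun u => f u + f (-u)) volume B C :=
    (hf B C).add (hf (-C) (-B)).comp_neg
  have hg : ∫ u in B..C, (g u + g (-u))
      = (∫ u in B..C, (f u + f (-u))) - ∫ u in B..C, (F u + F (-u)) := by
    rw [← integral_sub hfsym hF]
    exact integral_congr fun u hu => by simp only [hsplit u hu]; ring
  rw [integral_neg_self_eq_add_integral_add_comp_neg hf B C, hg,
    integral_add_comp_neg_eq_of_differentiableOn hpos hneg]
  ring

lemma reProdIm_subset_of_le_abs {B ε p q : ℝ} (hε : 0 ≤ ε) (h : ∀ u ∈ [[p, q]], B ≤ |u|) :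
    [[p, q]] ×ℂ [[-ε, 0]]
      ⊆ {w : ℂ | ∃ z y : ℝ, B ≤ |z| ∧ 0 ≤ y ∧ y ≤ ε ∧ w = (z : ℂ) - I * y} := by
  rintro w ⟨hre, him⟩
  rw [mem_preimage, uIcc_of_le (neg_nonpos.2 hε)] at him
  exact ⟨w.re, -w.im, h _ hre, by linarith [him.2], by linarith [him.1],
    by apply Complex.ext <;> simp⟩

lemma le_abs_of_mem_uIcc {B C u : ℝ} (hC : B ≤ C) (hu : u ∈ [[B, C]] ∨ u ∈ [[-C, -B]]) :
    B ≤ |u| := by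
  rw [uIcc_of_le hC, uIcc_of_le (neg_le_neg hC)] at hu
  rcases hu with hu | hu
  · exact hu.1.trans (le_abs_self u)
  · exact (le_neg.1 hu.2).trans (neg_le_abs u)

theorem stmt_0_general (a ε : ℝ) (hε : 0 < ε) (B : ℝ)
    (hB : B > Real.sqrt ((|a| + ε ^ 2) / 3))
    (θ : ℝ → ℂ) (hθint : Integrable θ)
    (ψ : ℝ → ℂ) (φ : ℂ → ℂ) (U : Set ℂ)
    (hRU : {w : ℂ | ∃ z y : ℝ, B ≤ |z| ∧ 0 ≤ y ∧ y ≤ ε ∧ w = (z : ℂ) - Complex.I * y} ⊆ U)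
    (hφhol : DifferentiableOn ℂ φ U)
    (hsum : ∀ lam : ℝ, B ≤ |lam| → θ lam = φ lam + ψ lam)
    (hφtop : Tendsto (fun C : ℝ =>
        sSup ((fun y : ℝ => ‖φ ((C : ℂ) - Complex.I * y)‖) '' Icc 0 ε))
      atTop (nhds 0))
    (hφbot : Tendsto (fun C : ℝ =>
        sSup ((fun y : ℝ => ‖φ ((C : ℂ) - Complex.I * y)‖) '' Icc 0 ε))
      atBot (nhds 0))
    (x t : ℝ) (ht : 0 ≤ t) :
    Tendsto (fun C : ℝ =>
        (∫ lam in (-C)..C, E a lam x t * θ lam)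
        - ((∫ lam in (-B)..B, E a lam x t * θ lam)
          + (∫ lam in B..C,
              (E a lam x t * ψ lam + E a (-(lam : ℂ)) x t * ψ (-lam)))
          + (∫ z in B..C,
              (E a ((z : ℂ) - Complex.I * ε) x t * φ ((z : ℂ) - Complex.I * ε)
                + E a (-(z : ℂ) - Complex.I * ε) x t * φ (-(z : ℂ) - Complex.I * ε)))
          + Complex.I * (∫ y in (0:ℝ)..ε,
              E a (-(B : ℂ) - Complex.I * y) x t * φ (-(B : ℂ) - Complex.I * y))
          - Complex.I * (∫ y in (0:ℝ)..ε,
              E a ((B : ℂ) - Complex.I * y) x t * φ ((B : ℂ) - Complex.I * y))))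
      atTop (nhds 0) := by
  have hvert : ∀ l : Filter ℝ, (∀ᶠ c in l, B ≤ |c|) →
      Tendsto (fun c : ℝ => sSup ((fun y : ℝ => ‖φ (c - I * y)‖) '' Icc 0 ε)) l (nhds 0) →
      Tendsto (fun c : ℝ => ∫ y in 0..ε, E a (c - I * y) x t * φ (c - I * y)) l (nhds 0) :=
    fun l hl => tendsto_integral_E_mul_vertical ht hε.le <| hl.mono fun c hc =>
      ⟨three_mul_sq_ge_of_sqrt_lt hB hc,
        hφhol.continuousOn.comp (by fun_prop) fun y hy => hRU ⟨c, y, hc, hy.1, hy.2, rfl⟩⟩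
  have hlim : Tendsto (fun C : ℝ => I * (∫ y in 0..ε, E a (C - I * y) x t * φ (C - I * y))
      - I * (∫ y in 0..ε, E a (-C - I * y) x t * φ (-C - I * y))) atTop (nhds 0) := by
    have htop := hvert atTop ((eventually_ge_atTop B).mono fun c hc => hc.trans (le_abs_self c))
      hφtop
    have hbot := hvert atBot ((eventually_le_atBot (-B)).mono fun c hc =>
      (le_neg.1 hc).trans (neg_le_abs c)) hφbot
    simpa using (htop.const_mul I).sub ((hbot.comp tendsto_neg_atTop_atBot).const_mul I)
  refine hlim.congr' ?_
  filter_upwards [eventually_ge_atTop B] with C hC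
  have hF : DifferentiableOn ℂ (fun w => E a w x t * φ w) U :=
    (differentiable_E a x t).differentiableOn.mul hφhol
  have key := integral_neg_self_sub_shifted_contour_eq (ε := ε)
    (f := fun lam => E a lam x t * θ lam) (g := fun lam => E a lam x t * ψ lam)
    (fun _ _ => (integrable_E_mul hθint a x t).intervalIntegrable)
    (hF.mono <| (reProdIm_subset_of_le_abs hε.le fun u hu =>
      le_abs_of_mem_uIcc hC (.inl hu)).trans hRU)
    (hF.mono <| (reProdIm_subset_of_le_abs hε.le fun u hu =>
      le_abs_of_mem_uIcc hC (.inr hu)).trans hRU)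
    (fun u hu => by
      have hu' := le_abs_of_mem_uIcc hC (.inl hu)
      rw [hsum u hu', hsum (-u) (by rwa [abs_neg]), ofReal_neg]
      ring)
  simp only [ofReal_neg] at key
  exact key.symm

/-- contour-shifting identity for the principal-value integral
`PV ∫_ℝ E(λ; x, t) θ(λ) dλ`.  Under the stated decomposition `θ = φ + ψ` for `|λ| ≥ B`
(with `ψ = O(λ^{−N})` on the real line, `φ` holomorphic on a neighbourhood of the closed
region `{z − iy : |z| ≥ B, 0 ≤ y ≤ ε}` and `max_{y∈[0,ε]}|φ(C − iy)| → 0` as `C → ±∞`),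
for every `x ∈ ℝ` and `t ≥ 0` the difference `D(C)` between `∫_{−C}^{C} E θ` and the
bracketed deformed-contour expression tends to `0` as `C → ∞`. -/
theorem stmt_0 (a ε : ℝ) (hε : 0 < ε) (N : ℕ) (B : ℝ)
    (hB : B > Real.sqrt ((|a| + ε ^ 2) / 3))
    (θ : ℝ → ℂ) (hθint : Integrable θ) (hθbdd : ∃ Mθ : ℝ, ∀ lam : ℝ, ‖θ lam‖ ≤ Mθ)
    (ψ : ℝ → ℂ) (φ : ℂ → ℂ) (U : Set ℂ) (hUopen : IsOpen U)
    (hRU : {w : ℂ | ∃ z y : ℝ, B ≤ |z| ∧ 0 ≤ y ∧ y ≤ ε ∧ w = (z : ℂ) - Complex.I * y} ⊆ U)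
    (hφhol : DifferentiableOn ℂ φ U)
    (hsum : ∀ lam : ℝ, B ≤ |lam| → θ lam = φ lam + ψ lam)
    (K : ℝ) (hK : 0 < K)
    (hψ : ∀ lam : ℝ, B ≤ |lam| → ‖ψ lam‖ ≤ K / |lam| ^ N)
    (hφtop : Tendsto (fun C : ℝ =>
        sSup ((fun y : ℝ => ‖φ ((C : ℂ) - Complex.I * y)‖) '' Icc 0 ε))
      atTop (nhds 0))
    (hφbot : Tendsto (fun C : ℝ =>
        sSup ((fun y : ℝ => ‖φ ((C : ℂ) - Complex.I * y)‖) '' Icc 0 ε))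
      atBot (nhds 0))
    (x t : ℝ) (ht : 0 ≤ t) :
    Tendsto (fun C : ℝ =>
        (∫ lam in (-C)..C, E a lam x t * θ lam)
        - ((∫ lam in (-B)..B, E a lam x t * θ lam)
          + (∫ lam in B..C,
              (E a lam x t * ψ lam + E a (-(lam : ℂ)) x t * ψ (-lam)))
          + (∫ z in B..C,
              (E a ((z : ℂ) - Complex.I * ε) x t * φ ((z : ℂ) - Complex.I * ε)
                + E a (-(z : ℂ) - Complex.I * ε) x t * φ (-(z : ℂ) - Complex.I * ε)))
          + Complex.I * (∫ y in (0:ℝ)..ε,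
              E a (-(B : ℂ) - Complex.I * y) x t * φ (-(B : ℂ) - Complex.I * y))
          - Complex.I * (∫ y in (0:ℝ)..ε,
              E a ((B : ℂ) - Complex.I * y) x t * φ ((B : ℂ) - Complex.I * y))))
      atTop (nhds 0) :=
  stmt_0_general a ε hε B hB θ hθint ψ φ U hRU hφhol hsum hφtop hφbot x t ht
end

section
/- Fix a ∈ ℝ, ε > 0, b := √((|a| + ε²)/3), B > b, τ > 0, and ξ ∈ ℝ. Let φ be a complex-valued function defined on {z − iy : z ∈ ℝ, |z| ≥ B, 0 ≤ y ≤ ε}, continuous on each vertical segment {C − iy : y ∈ [0, ε]} for |C| ≥ B. Then for every real C with |C| ≥ B, every x ≤ ξ and every t ≥ τ, ∫_{0}^{ε} |E(C − iy; x, t) φ(C − iy)| dy ≤ ( max_{y∈[0,ε]} |φ(C − iy)| ) · ∫_{0}^{ε} exp(−3y(B² − b²)τ + ξy) dy. Consequently, if max_{y∈[0,ε]} |φ(C − iy)| → 0 as C → ±∞, then sup{ ∫_{0}^{ε} |E(C − iy; x, t) φ(C − iy)| dy : x ≤ ξ, t ≥ τ } → 0 as C → ±∞. -/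
/-!
On the vertical segment `λ = C − iy` one has `|E(λ; x, t)| = exp(xy − ty(3C² − y² − a))`, and the
choice of `b` gives `3C² − y² − a ≥ 3(B² − b²) ≥ 0` for `|C| ≥ B`, `0 ≤ y ≤ ε`. Hence `|E|` is
dominated by `exp(−3y(B² − b²)τ + ξy)` uniformly in `x ≤ ξ`, `t ≥ τ`, the integral is at most
`max |φ|` times a constant, and the limit follows by squeezing.
-/

open Complex Filter Set MeasureTheory intervalIntegral

theorem norm_E_sub_I_mul (a C y x t : ℝ) :
    ‖E a ((C : ℂ) - I * y) x t‖ = Real.exp (x * y - t * y * (3 * C ^ 2 - y ^ 2 - a)) := by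
  rw [E, Complex.norm_exp]
  congr 1
  simp only [pow_succ, pow_zero, one_mul, sub_re, mul_re, I_re, ofReal_re, zero_mul, I_im,
    ofReal_im, mul_zero, sub_self, sub_zero, sub_im, mul_im, zero_add, zero_sub, mul_neg,
    sub_neg_eq_add, neg_zero, neg_mul, neg_neg, add_zero, neg_add_rev]
  ring

theorem norm_E_sub_I_mul_le_s4 {a ε b B C y x t ξ τ : ℝ} (hb : 3 * b ^ 2 = |a| + ε ^ 2)
    (hbB : b ^ 2 ≤ B ^ 2) (hBC : B ^ 2 ≤ C ^ 2) (hy : y ∈ Icc 0 ε) (hx : x ≤ ξ)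
    (hτ : 0 ≤ τ) (ht : τ ≤ t) :
    ‖E a ((C : ℂ) - I * y) x t‖ ≤ Real.exp (-3 * y * (B ^ 2 - b ^ 2) * τ + ξ * y) := by
  obtain ⟨hy0, hyε⟩ := hy
  rw [norm_E_sub_I_mul, Real.exp_le_exp]
  have hxy : x * y ≤ ξ * y := mul_le_mul_of_nonneg_right hx hy0
  have hgap : 3 * (B ^ 2 - b ^ 2) ≤ 3 * C ^ 2 - y ^ 2 - a := by
    nlinarith [le_abs_self a]
  have hdecay : τ * y * (3 * (B ^ 2 - b ^ 2)) ≤ t * y * (3 * C ^ 2 - y ^ 2 - a) :=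
    mul_le_mul (mul_le_mul_of_nonneg_right ht hy0) hgap (by linarith)
      (mul_nonneg (hτ.trans ht) hy0)
  linarith

theorem integral_norm_mul_le_sSup_mul {R : Type*} [NormedRing R] {f u : ℝ → R} {g : ℝ → ℝ}
    {α β : ℝ} (hαβ : α ≤ β) (hf : ContinuousOn f (Icc α β)) (hu : ContinuousOn u (Icc α β))
    (hg : IntervalIntegrable g volume α β) (hfg : ∀ y ∈ Icc α β, ‖f y‖ ≤ g y) :
    ∫ y in α..β, ‖f y * u y‖ ≤ sSup ((fun y => ‖u y‖) '' Icc α β) * ∫ y in α..β, g y := by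
  set M := sSup ((fun y => ‖u y‖) '' Icc α β)
  have hbdd : BddAbove ((fun y => ‖u y‖) '' Icc α β) :=
    (isCompact_Icc.image_of_continuousOn hu.norm).bddAbove
  have huM : ∀ y ∈ Icc α β, ‖u y‖ ≤ M := fun y hy => le_csSup hbdd (mem_image_of_mem _ hy)
  have hfu : IntervalIntegrable (fun y => ‖f y * u y‖) volume α β :=
    ContinuousOn.intervalIntegrable (by rw [uIcc_of_le hαβ]; exact (hf.mul hu).norm)
  calc ∫ y in α..β, ‖f y * u y‖
      ≤ ∫ y in α..β, M * g y := by
        refine integral_mono_on hαβ hfu (hg.const_mul M) fun y hy => ?_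
        calc ‖f y * u y‖ ≤ ‖f y‖ * ‖u y‖ := norm_mul_le _ _
          _ ≤ g y * M := mul_le_mul (hfg y hy) (huM y hy) (norm_nonneg _)
              ((norm_nonneg _).trans (hfg y hy))
          _ = M * g y := mul_comm _ _
    _ = M * ∫ y in α..β, g y := integral_const_mul M g

theorem tendsto_sSup_image_of_le {ι α : Type*} {l : Filter ι} {F : ι → α → ℝ} {G : ι → ℝ}
    {s : Set α} (hs : s.Nonempty) (hF : ∀ᶠ i in l, ∀ p ∈ s, 0 ≤ F i p ∧ F i p ≤ G i)
    (hG : Tendsto G l (nhds 0)) : Tendsto (fun i => sSup (F i '' s)) l (nhds 0) := by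
  refine squeeze_zero' ?_ ?_ hG
  · filter_upwards [hF] with i hi
    obtain ⟨p, hp⟩ := hs
    exact (hi p hp).1.trans (le_csSup ⟨G i, forall_mem_image.2 fun q hq => (hi q hq).2⟩
      (mem_image_of_mem _ hp))
  · filter_upwards [hF] with i hi
    exact csSup_le (hs.image _) (forall_mem_image.2 fun q hq => (hi q hq).2)

/-- with `b = √((|a| + ε²)/3)`, `B > b`, `τ > 0`, `ξ ∈ ℝ`, and `φ`
continuous on each vertical segment `{C − iy : y ∈ [0, ε]}` for `|C| ≥ B`: for every real
`C` with `|C| ≥ B`, every `x ≤ ξ` and `t ≥ τ`,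
`∫₀^ε |E(C − iy; x, t)φ(C − iy)| dy ≤ (max_{y∈[0,ε]} |φ(C − iy)|) ∫₀^ε e^{−3y(B²−b²)τ + ξy} dy`,
and consequently, if `max_{y∈[0,ε]} |φ(C − iy)| → 0` as `C → ±∞`, then
`sup{∫₀^ε |E(C − iy; x, t)φ(C − iy)| dy : x ≤ ξ, t ≥ τ} → 0` as `C → ±∞`. -/
theorem stmt_4 (a ε : ℝ) (hε : 0 < ε) (b B τ ξ : ℝ)
    (hb : b = Real.sqrt ((|a| + ε ^ 2) / 3)) (hB : b < B) (hτ : 0 < τ)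
    (φ : ℂ → ℂ)
    (hcont : ∀ C : ℝ, B ≤ |C| →
      ContinuousOn (fun y : ℝ => φ ((C : ℂ) - Complex.I * y)) (Icc 0 ε)) :
    (∀ C x t : ℝ, B ≤ |C| → x ≤ ξ → τ ≤ t →
      (∫ y in (0:ℝ)..ε,
          ‖E a ((C : ℂ) - Complex.I * y) x t * φ ((C : ℂ) - Complex.I * y)‖)
        ≤ sSup ((fun y : ℝ => ‖φ ((C : ℂ) - Complex.I * y)‖) '' Icc 0 ε)
            * ∫ y in (0:ℝ)..ε, Real.exp (-3 * y * (B ^ 2 - b ^ 2) * τ + ξ * y)) ∧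
    ((Tendsto (fun C : ℝ =>
          sSup ((fun y : ℝ => ‖φ ((C : ℂ) - Complex.I * y)‖) '' Icc 0 ε))
        atTop (nhds 0) ∧
      Tendsto (fun C : ℝ =>
          sSup ((fun y : ℝ => ‖φ ((C : ℂ) - Complex.I * y)‖) '' Icc 0 ε))
        atBot (nhds 0)) →
      (Tendsto (fun C : ℝ =>
          sSup ((fun p : ℝ × ℝ =>
              ∫ y in (0:ℝ)..ε,
                ‖E a ((C : ℂ) - Complex.I * y) p.1 p.2
                  * φ ((C : ℂ) - Complex.I * y)‖) '' (Iic ξ ×ˢ Ici τ)))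
        atTop (nhds 0) ∧
       Tendsto (fun C : ℝ =>
          sSup ((fun p : ℝ × ℝ =>
              ∫ y in (0:ℝ)..ε,
                ‖E a ((C : ℂ) - Complex.I * y) p.1 p.2
                  * φ ((C : ℂ) - Complex.I * y)‖) '' (Iic ξ ×ˢ Ici τ)))
        atBot (nhds 0))) := by
  have hb0 : 0 ≤ b := hb ▸ Real.sqrt_nonneg _
  have hb2 : 3 * b ^ 2 = |a| + ε ^ 2 := by
    rw [hb, Real.sq_sqrt (by positivity)]; ring
  have hbB : b ^ 2 ≤ B ^ 2 := pow_le_pow_left₀ hb0 hB.le 2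
  set K := ∫ y in (0:ℝ)..ε, Real.exp (-3 * y * (B ^ 2 - b ^ 2) * τ + ξ * y)
  have bound : ∀ C x t : ℝ, B ≤ |C| → x ≤ ξ → τ ≤ t →
      (∫ y in (0:ℝ)..ε, ‖E a ((C : ℂ) - I * y) x t * φ ((C : ℂ) - I * y)‖)
        ≤ sSup ((fun y : ℝ => ‖φ ((C : ℂ) - I * y)‖) '' Icc 0 ε) * K :=
    fun C x t hC hx ht =>
      integral_norm_mul_le_sSup_mul hε.le (by unfold E; fun_prop) (hcont C hC)
        ((by fun_prop : Continuous fun y : ℝ =>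
          Real.exp (-3 * y * (B ^ 2 - b ^ 2) * τ + ξ * y)).intervalIntegrable _ _)
        fun y hy => norm_E_sub_I_mul_le_s4 hb2 hbB
          (sq_le_sq.2 (by rwa [abs_of_pos (hb0.trans_lt hB)])) hy hx hτ.le ht
  have hne : (Iic ξ ×ˢ Ici τ).Nonempty := ⟨(ξ, τ), mem_Iic.2 le_rfl, mem_Ici.2 le_rfl⟩
  have hbounds : ∀ C : ℝ, B ≤ |C| → ∀ p ∈ Iic ξ ×ˢ Ici τ,
      0 ≤ (∫ y in (0:ℝ)..ε, ‖E a ((C : ℂ) - I * y) p.1 p.2 * φ ((C : ℂ) - I * y)‖) ∧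
      (∫ y in (0:ℝ)..ε, ‖E a ((C : ℂ) - I * y) p.1 p.2 * φ ((C : ℂ) - I * y)‖)
        ≤ sSup ((fun y : ℝ => ‖φ ((C : ℂ) - I * y)‖) '' Icc 0 ε) * K :=
    fun C hC p hp =>
      ⟨integral_nonneg hε.le fun _ _ => norm_nonneg _, bound C p.1 p.2 hC hp.1 hp.2⟩
  refine ⟨bound, fun ⟨hTop, hBot⟩ => ⟨?_, ?_⟩⟩
  · refine tendsto_sSup_image_of_le hne ?_ (by simpa using hTop.mul_const K)
    filter_upwards [tendsto_abs_atTop_atTop.eventually_ge_atTop B] with C hC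
    exact hbounds C hC
  · refine tendsto_sSup_image_of_le hne ?_ (by simpa using hBot.mul_const K)
    filter_upwards [tendsto_abs_atBot_atTop.eventually_ge_atTop B] with C hC
    exact hbounds C hC
end

section
/- The interval integrals I₂(t) := ∫_{1/(2√|t|)}^{1/√|t|} e^{iλ}(1 − e^{iλ³ t}) λ^{−1} dλ, defined for real t ≠ 0, satisfy I₂(t) → 0 as t → 0 through nonzero real values. -/
open Complex Filter intervalIntegral Set MeasureTheory

/-!
Write `I₂(t) = J(0) - J(t)` with `J(t) = ∫ e^{i(x + t x³)} x⁻¹ dx` over `[1/(2s), 1/s]`,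
`s = √|t|`. Since `x⁻¹ = ψ φ'` for the phase `φ = x + t x³` and `ψ = 1 / (x + 3 t x³)`, one
integration by parts bounds such an integral by twice the endpoint values of `|ψ|` as long as `ψ`
is monotone. For `t ≥ 0` this gives `J(t) = O(s)`. For `t < 0` the phase is stationary at
`x₀ = 1/(√3 s)`, inside the interval: a window of half-width `h` around `x₀` contributes
`O(h / x₀)` trivially, while away from it `|x + 3 t x³| ≳ h`. Taking `h = |t|^{-1/4}` gives
`I₂(t) = O(|t|^{1/4})`.
-/

theorem norm_integral_mul_cexp_mul_le {φ φ' ψ ψ' : ℝ → ℝ} {a b : ℝ} (hab : a ≤ b)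
    (hφ : ∀ x ∈ Icc a b, HasDerivAt φ (φ' x) x) (hψ : ∀ x ∈ Icc a b, HasDerivAt ψ (ψ' x) x)
    (hφ' : IntervalIntegrable φ' volume a b) (hψ' : IntervalIntegrable ψ' volume a b) :
    ‖∫ x in a..b, ψ x * (cexp (φ x * I) * φ' x)‖ ≤ |ψ a| + |ψ b| + ∫ x in a..b, |ψ' x| := by
  rw [← uIcc_of_le hab] at hφ hψ
  have hexp : ContinuousOn (fun x => cexp (φ x * I)) (uIcc a b) := fun x hx =>
    ((hφ x hx).ofReal_comp.mul_const I).cexp.continuousAt.continuousWithinAt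
  have hprim : ∀ x ∈ uIcc a b,
      HasDerivAt (fun x => -I * cexp (φ x * I)) (cexp (φ x * I) * φ' x) x := fun x hx => by
    refine ((((hφ x hx).ofReal_comp.mul_const I).cexp).const_mul (-I)).congr_deriv ?_
    linear_combination (-(cexp (φ x * I) * φ' x)) * I_sq
  rw [integral_mul_deriv_eq_deriv_mul (fun x hx => (hψ x hx).ofReal_comp) hprim
    ⟨hψ'.1.ofReal, hψ'.2.ofReal⟩
    (IntervalIntegrable.continuousOn_mul ⟨hφ'.1.ofReal, hφ'.2.ofReal⟩ hexp)]
  have hrem : ‖∫ x in a..b, (ψ' x : ℂ) * (-I * cexp (φ x * I))‖ ≤ ∫ x in a..b, |ψ' x| := by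
    refine (intervalIntegral.norm_integral_le_integral_norm hab).trans_eq
      (integral_congr fun x _ => ?_)
    simp [norm_exp_ofReal_mul_I]
  refine (norm_sub_le _ _).trans (add_le_add ((norm_sub_le _ _).trans_eq ?_) hrem)
  simp [norm_exp_ofReal_mul_I, add_comm]

theorem integral_abs_deriv_eq_abs_sub {ψ ψ' : ℝ → ℝ} {a b : ℝ} (hab : a ≤ b)
    (hψ : ∀ x ∈ Icc a b, HasDerivAt ψ (ψ' x) x) (hψ' : IntervalIntegrable ψ' volume a b)
    (hsign : (∀ x ∈ Icc a b, 0 ≤ ψ' x) ∨ ∀ x ∈ Icc a b, ψ' x ≤ 0) :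
    ∫ x in a..b, |ψ' x| = |ψ b - ψ a| := by
  rw [← uIcc_of_le hab] at hψ
  rw [← integral_eq_sub_of_hasDerivAt hψ hψ']
  rcases hsign with h | h
  · rw [integral_congr fun x hx => abs_of_nonneg (h x (uIcc_of_le hab ▸ hx)), abs_of_nonneg]
    exact integral_nonneg hab h
  · rw [integral_congr fun x hx => abs_of_nonpos (h x (uIcc_of_le hab ▸ hx)), abs_of_nonpos,
      intervalIntegral.integral_neg]
    simpa using integral_nonneg hab fun x hx => neg_nonneg.2 (h x hx)

theorem norm_integral_mul_cexp_mul_le_of_deriv_sign {φ φ' ψ ψ' : ℝ → ℝ} {a b : ℝ} (hab : a ≤ b)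
    (hφ : ∀ x ∈ Icc a b, HasDerivAt φ (φ' x) x) (hψ : ∀ x ∈ Icc a b, HasDerivAt ψ (ψ' x) x)
    (hφ' : IntervalIntegrable φ' volume a b) (hψ' : IntervalIntegrable ψ' volume a b)
    (hsign : (∀ x ∈ Icc a b, 0 ≤ ψ' x) ∨ ∀ x ∈ Icc a b, ψ' x ≤ 0) :
    ‖∫ x in a..b, ψ x * (cexp (φ x * I) * φ' x)‖ ≤ 2 * (|ψ a| + |ψ b|) := by
  have h := norm_integral_mul_cexp_mul_le hab hφ hψ hφ' hψ'
  rw [integral_abs_deriv_eq_abs_sub hab hψ hψ' hsign] at h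
  linarith [abs_sub (ψ b) (ψ a)]

noncomputable def cubicPhaseIntegral (t a b : ℝ) : ℂ :=
  ∫ x in a..b, cexp (↑(x + t * x ^ 3) * I) / x

theorem intervalIntegrable_cubicPhase (t : ℝ) {a b : ℝ} (ha : 0 < a) (hb : 0 < b) :
    IntervalIntegrable (fun x : ℝ => cexp (↑(x + t * x ^ 3) * I) / x) volume a b := by
  refine ContinuousOn.intervalIntegrable (ContinuousOn.div (by fun_prop) (by fun_prop) ?_)
  intro x hx
  exact ofReal_ne_zero.2 (lt_of_lt_of_le (lt_min ha hb) hx.1).ne'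

theorem cubicPhaseIntegral_add_adjacent (t : ℝ) {a b c : ℝ} (ha : 0 < a) (hb : 0 < b)
    (hc : 0 < c) :
    cubicPhaseIntegral t a b + cubicPhaseIntegral t b c = cubicPhaseIntegral t a c :=
  integral_add_adjacent_intervals (intervalIntegrable_cubicPhase t ha hb)
    (intervalIntegrable_cubicPhase t hb hc)

theorem norm_cubicPhaseIntegral_le_sub_div {t c d : ℝ} (hc : 0 < c) (hcd : c ≤ d) :
    ‖cubicPhaseIntegral t c d‖ ≤ (d - c) / c := by
  have hbound : ∀ x ∈ uIoc c d, ‖cexp (↑(x + t * x ^ 3) * I) / x‖ ≤ c⁻¹ := fun x hx => by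
    rw [uIoc_of_le hcd] at hx
    rw [norm_div, norm_exp_ofReal_mul_I, norm_real, Real.norm_of_nonneg (hc.trans hx.1).le,
      one_div]
    exact inv_anti₀ hc hx.1.le
  refine (norm_integral_le_of_norm_le_const hbound).trans_eq ?_
  rw [abs_of_nonneg (sub_nonneg.2 hcd), div_eq_inv_mul]

theorem norm_cubicPhaseIntegral_le_of_le_abs {t a b m : ℝ} (hab : a ≤ b) (hm : 0 < m)
    (hu : ∀ x ∈ Icc a b, m ≤ |x + 3 * t * x ^ 3|)
    (hsign : (∀ x ∈ Icc a b, 0 ≤ 1 + 9 * t * x ^ 2) ∨ ∀ x ∈ Icc a b, 1 + 9 * t * x ^ 2 ≤ 0) :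
    ‖cubicPhaseIntegral t a b‖ ≤ 4 / m := by
  have hu0 : ∀ x ∈ Icc a b, x + 3 * t * x ^ 3 ≠ 0 := fun x hx =>
    abs_pos.1 (hm.trans_le (hu x hx))
  have hφ : ∀ x ∈ Icc a b, HasDerivAt (fun x => x + t * x ^ 3) (1 + 3 * t * x ^ 2) x :=
    fun x _ => ((hasDerivAt_id' x).add ((hasDerivAt_pow 3 x).const_mul t)).congr_deriv (by ring)
  have hψ : ∀ x ∈ Icc a b, HasDerivAt (fun x => (x + 3 * t * x ^ 3)⁻¹)
      (-(1 + 9 * t * x ^ 2) / (x + 3 * t * x ^ 3) ^ 2) x := by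
    intro x hx
    have hu : HasDerivAt (fun x => x + 3 * t * x ^ 3) (1 + 9 * t * x ^ 2) x :=
      ((hasDerivAt_id' x).add ((hasDerivAt_pow 3 x).const_mul (3 * t))).congr_deriv (by ring)
    exact hu.inv (hu0 x hx)
  have hψ' : ContinuousOn (fun x => -(1 + 9 * t * x ^ 2) / (x + 3 * t * x ^ 3) ^ 2)
      (uIcc a b) := by
    rw [uIcc_of_le hab]
    exact ContinuousOn.div (by fun_prop) (by fun_prop) fun x hx => pow_ne_zero 2 (hu0 x hx)
  have hsign' : (∀ x ∈ Icc a b, 0 ≤ -(1 + 9 * t * x ^ 2) / (x + 3 * t * x ^ 3) ^ 2) ∨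
      ∀ x ∈ Icc a b, -(1 + 9 * t * x ^ 2) / (x + 3 * t * x ^ 3) ^ 2 ≤ 0 := by
    refine hsign.symm.imp (fun h x hx => ?_) (fun h x hx => ?_)
    · exact div_nonneg (neg_nonneg.2 (h x hx)) (sq_nonneg _)
    · exact div_nonpos_of_nonpos_of_nonneg (neg_nonpos.2 (h x hx)) (sq_nonneg _)
  have hparts := norm_integral_mul_cexp_mul_le_of_deriv_sign hab hφ hψ
    (by apply Continuous.intervalIntegrable; fun_prop) hψ'.intervalIntegrable hsign'
  have hcongr : cubicPhaseIntegral t a b = ∫ x in a..b, ((x + 3 * t * x ^ 3)⁻¹ : ℝ) *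
      (cexp (↑(x + t * x ^ 3) * I) * ↑(1 + 3 * t * x ^ 2 : ℝ)) := by
    refine integral_congr fun x hx => ?_
    rw [uIcc_of_le hab] at hx
    have hfac : x + 3 * t * x ^ 3 = x * (1 + 3 * t * x ^ 2) := by ring
    have hψφ : (x + 3 * t * x ^ 3)⁻¹ * (1 + 3 * t * x ^ 2) = x⁻¹ := by
      rw [hfac, mul_inv, inv_mul_cancel_right₀ (right_ne_zero_of_mul (hfac ▸ hu0 x hx))]
    rw [mul_left_comm, ← ofReal_mul, hψφ, ofReal_inv, div_eq_mul_inv]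
  have hinv : ∀ x ∈ Icc a b, |(x + 3 * t * x ^ 3)⁻¹| ≤ m⁻¹ := fun x hx => by
    rw [abs_inv]
    exact inv_anti₀ hm (hu x hx)
  rw [hcongr]
  refine hparts.trans ?_
  rw [div_eq_mul_inv]
  linarith [hinv a ⟨le_rfl, hab⟩, hinv b ⟨hab, le_rfl⟩]

theorem norm_cubicPhaseIntegral_le_of_nonneg {t a b : ℝ} (ht : 0 ≤ t) (ha : 0 < a)
    (hab : a ≤ b) : ‖cubicPhaseIntegral t a b‖ ≤ 4 / a :=
  norm_cubicPhaseIntegral_le_of_le_abs hab ha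
    (fun x hx => by
      have hx0 := ha.trans_le hx.1
      rw [abs_of_pos (by positivity)]
      nlinarith [hx.1, mul_nonneg ht (pow_pos hx0 3).le])
    (Or.inl fun x _ => by positivity)

theorem norm_cubicPhaseIntegral_le_of_neg {t a b x₀ h : ℝ} (ht : 3 * t * x₀ ^ 2 = -1)
    (ha : 0 < a) (hax₀ : x₀ ^ 2 ≤ 3 * a ^ 2) (hh : 0 < h) (hac : a ≤ x₀ - h)
    (hdb : x₀ + h ≤ b) :
    ‖cubicPhaseIntegral t a b‖ ≤ 10 / h + 4 * h / x₀ := by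
  have hx₀ : 0 < x₀ := by linarith
  have hx₀a : x₀ ≤ 2 * a := by nlinarith
  have hfac : ∀ x, x₀ ^ 2 * (x + 3 * t * x ^ 3) = x * (x₀ - x) * (x₀ + x) := fun x => by
    linear_combination x ^ 3 * ht
  have hsign : ∀ x ∈ Icc a b, 1 + 9 * t * x ^ 2 ≤ 0 := fun x hx => by
    have : x₀ ^ 2 * (1 + 9 * t * x ^ 2) ≤ 0 := by
      nlinarith [hx.1, mul_le_mul hx.1 hx.1 ha.le (ha.trans_le hx.1).le]
    exact nonpos_of_mul_nonpos_right this (by positivity)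
  have hleft : ‖cubicPhaseIntegral t a (x₀ - h)‖ ≤ 8 / h := by
    refine (norm_cubicPhaseIntegral_le_of_le_abs hac (half_pos hh) (fun x hx => ?_)
      (Or.inr fun x hx => hsign x ⟨hx.1, hx.2.trans (by linarith)⟩)).trans_eq (by field_simp; ring)
    have hx0 : 0 < x := ha.trans_le hx.1
    have hprod : x₀ ^ 2 / 2 ≤ x * (x₀ + x) := by nlinarith [hx.1]
    have hlow : x₀ ^ 2 * (h / 2) ≤ x₀ ^ 2 * (x + 3 * t * x ^ 3) := by
      rw [hfac, mul_assoc, mul_comm x, mul_assoc]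
      nlinarith [mul_le_mul (by linarith [hx.2] : h ≤ x₀ - x) hprod (by positivity)
        (by linarith [hx.2])]
    exact (le_of_mul_le_mul_left hlow (by positivity)).trans (le_abs_self _)
  have hright : ‖cubicPhaseIntegral t (x₀ + h) b‖ ≤ 2 / h := by
    refine (norm_cubicPhaseIntegral_le_of_le_abs hdb (by positivity : 0 < 2 * h) (fun x hx => ?_)
      (Or.inr fun x hx => hsign x ⟨by linarith [hx.1], hx.2⟩)).trans_eq (by field_simp; ring)
    have hprod : 2 * x₀ ^ 2 ≤ x * (x + x₀) := by nlinarith [hx.1]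
    have hlow : x₀ ^ 2 * (2 * h) ≤ x₀ ^ 2 * -(x + 3 * t * x ^ 3) := by
      rw [mul_neg, hfac]
      nlinarith [mul_le_mul (by linarith [hx.1] : h ≤ x - x₀) hprod (by positivity)
        (by linarith [hx.1])]
    exact (le_of_mul_le_mul_left hlow (by positivity)).trans (neg_le_abs _)
  have hmiddle : ‖cubicPhaseIntegral t (x₀ - h) (x₀ + h)‖ ≤ 4 * h / x₀ := by
    refine (norm_cubicPhaseIntegral_le_sub_div (by linarith) (by linarith)).trans ?_
    rw [div_le_div_iff₀ (by linarith) hx₀]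
    nlinarith [mul_le_mul_of_nonneg_left (hx₀a.trans (by linarith : 2 * a ≤ 2 * (x₀ - h))) hh.le]
  have hsplit : cubicPhaseIntegral t a b = cubicPhaseIntegral t a (x₀ - h) +
      cubicPhaseIntegral t (x₀ - h) (x₀ + h) + cubicPhaseIntegral t (x₀ + h) b := by
    rw [cubicPhaseIntegral_add_adjacent t ha (by linarith) (by linarith),
      cubicPhaseIntegral_add_adjacent t ha (by linarith) (by linarith)]
  rw [hsplit]
  refine norm_add₃_le.trans ?_
  rw [show 10 / h = 8 / h + 2 / h by ring]
  linarith

theorem norm_cubicPhaseIntegral_neg_pow_four_le {q : ℝ} (hq : 0 < q) (hq' : q ≤ 1 / 20) :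
    ‖cubicPhaseIntegral (-q ^ 4) (1 / (2 * q ^ 2)) (1 / q ^ 2)‖ ≤ 17 * q := by
  obtain ⟨hr3, hr3lo, hr3hi⟩ : √3 ^ 2 = 3 ∧ 1.7 < √3 ∧ √3 < 1.75 :=
    ⟨Real.sq_sqrt (by norm_num), (Real.lt_sqrt (by norm_num)).2 (by norm_num),
      (Real.sqrt_lt' (by norm_num)).2 (by norm_num)⟩
  have hq2 : 0 < q ^ 2 := by positivity
  refine (norm_cubicPhaseIntegral_le_of_neg (x₀ := 1 / (√3 * q ^ 2)) (h := 1 / q) ?_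
    (by positivity) ?_ (by positivity) ?_ ?_).trans ?_
  · rw [div_pow, mul_pow, hr3]; field_simp
  · rw [div_pow, div_pow, mul_pow, mul_pow, hr3, div_le_iff₀ (by positivity)]
    field_simp
    norm_num
  · rw [div_sub_div _ _ (by positivity) (by positivity),
      div_le_div_iff₀ (by positivity) (by positivity)]
    have hkey : √3 ≤ 2 - 2 * √3 * q := by nlinarith
    nlinarith [mul_le_mul_of_nonneg_left hkey (pow_pos hq 3).le]
  · rw [div_add_div _ _ (by positivity) (by positivity),
      div_le_div_iff₀ (by positivity) (by positivity)]
    have hkey : 1 + √3 * q ≤ √3 := by nlinarith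
    nlinarith [mul_le_mul_of_nonneg_left hkey (pow_pos hq 4).le]
  · field_simp
    nlinarith

theorem integral_eq_cubicPhaseIntegral_sub (t : ℝ) {a b : ℝ} (ha : 0 < a) (hb : 0 < b) :
    ∫ lam in a..b, cexp (I * lam) * (1 - cexp (I * (lam : ℂ) ^ 3 * t)) / lam =
      cubicPhaseIntegral 0 a b - cubicPhaseIntegral t a b := by
  rw [cubicPhaseIntegral, cubicPhaseIntegral,
    ← integral_sub (intervalIntegrable_cubicPhase 0 ha hb) (intervalIntegrable_cubicPhase t ha hb)]
  refine integral_congr fun x _ => ?_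
  push_cast
  rw [show ((x : ℂ) + t * x ^ 3) * I = I * x + I * x ^ 3 * t by ring, exp_add]
  ring_nf

theorem norm_integral_le_sqrt_sqrt_abs {t : ℝ} (ht : t ≠ 0) (hsmall : √√|t| ≤ 1 / 20) :
    ‖∫ lam in (1 / (2 * √|t|))..(1 / √|t|),
        cexp (I * lam) * (1 - cexp (I * (lam : ℂ) ^ 3 * t)) / lam‖ ≤ 18 * √√|t| := by
  set q := √√|t|
  have hq : 0 < q := by positivity
  have hsq : √|t| = q ^ 2 := (Real.sq_sqrt (Real.sqrt_nonneg _)).symm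
  have habs : |t| = q ^ 4 := by rw [← Real.sq_sqrt (abs_nonneg t), hsq]; ring
  have ha : 0 < 1 / (2 * q ^ 2) := by positivity
  have hab : 1 / (2 * q ^ 2) ≤ 1 / q ^ 2 :=
    one_div_le_one_div_of_le (by positivity) (by linarith [pow_pos hq 2])
  rw [hsq, integral_eq_cubicPhaseIntegral_sub t ha (by positivity)]
  have hfree : ‖cubicPhaseIntegral 0 (1 / (2 * q ^ 2)) (1 / q ^ 2)‖ ≤ 4 * (2 * q ^ 2) := by
    simpa only [div_div_eq_mul_div, div_one] using
      norm_cubicPhaseIntegral_le_of_nonneg le_rfl ha hab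
  have hcubic : ‖cubicPhaseIntegral t (1 / (2 * q ^ 2)) (1 / q ^ 2)‖ ≤ 17 * q := by
    rcases ht.lt_or_gt with hneg | hpos
    · have : t = -q ^ 4 := by linarith [abs_of_neg hneg]
      exact this ▸ norm_cubicPhaseIntegral_neg_pow_four_le hq hsmall
    · refine (norm_cubicPhaseIntegral_le_of_nonneg hpos.le ha hab).trans ?_
      rw [div_div_eq_mul_div, div_one]
      nlinarith
  calc _ ≤ _ := norm_sub_le _ _
    _ ≤ 4 * (2 * q ^ 2) + 17 * q := add_le_add hfree hcubic
    _ ≤ 18 * q := by nlinarith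

/-- `I₂(t) := ∫_{1/(2√|t|)}^{1/√|t|} e^{iλ}(1 − e^{iλ³t}) λ⁻¹ dλ → 0`
as `t → 0` through nonzero real values. -/
theorem stmt_10 :
    Tendsto (fun t : ℝ =>
        ∫ lam in (1 / (2 * Real.sqrt |t|))..(1 / Real.sqrt |t|),
          Complex.exp (Complex.I * lam)
            * (1 - Complex.exp (Complex.I * (lam : ℂ) ^ 3 * t)) / lam)
      (nhdsWithin 0 {t : ℝ | t ≠ 0}) (nhds 0) := by
  have hq : Tendsto (fun t : ℝ => √√|t|) (nhdsWithin 0 {t : ℝ | t ≠ 0}) (nhds 0) := by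
    simpa using (continuous_abs.sqrt.sqrt.tendsto (0 : ℝ)).mono_left nhdsWithin_le_nhds
  refine squeeze_zero_norm' ?_ (by simpa using hq.const_mul 18)
  filter_upwards [self_mem_nhdsWithin, hq.eventually_le_const (by norm_num : (0 : ℝ) < 1 / 20)]
    with t ht hsmall
  exact norm_integral_le_sqrt_sqrt_abs ht hsmall
end

section
/- For every real t with 0 < |t| < 1/4, setting T := 1/(2√|t|) (so T > 1), the following integration-by-parts identity holds: ∫_{1}^{T} e^{iλ}(1 − e^{−iλ³ t}) λ^{−1} dλ = [ e^{iλ}(iλ)^{−1} ( 1 − e^{−iλ³ t}(1 − 3λ²t)^{−1} ) ]_{λ=1}^{λ=T} + ∫_{1}^{T} e^{iλ}(iλ²)^{−1} ( 1 − e^{−iλ³ t}(1 − 3λ²t)^{−1} ) dλ − 6it ∫_{1}^{T} e^{iλ − iλ³ t} (1 − 3λ²t)^{−2} dλ. (Note that 1 − 3λ²t ∈ [1/4, 7/4] for λ ∈ [1, T], so all denominators are nonzero.) -/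
/-!
The bracketed function `F(λ)` is a primitive of the combination of the three integrands wherever
`λ ≠ 0` and `1 − 3λ²t ≠ 0`, so the identity is the fundamental theorem of calculus. The choice
`T = 1/(2√|t|)` gives `λ²|t| ≤ 1/4`, hence `1 − 3λ²t ≥ 1/4`, on `[1, T]`.
-/

open Complex intervalIntegral Set
open MeasureTheory (volume)

lemma hasDerivAt_exp_div_mul_one_sub_exp_div {t z : ℂ} (hz : z ≠ 0) (hD : 1 - 3 * z ^ 2 * t ≠ 0) :
    HasDerivAt
      (fun z : ℂ => exp (I * z) / (I * z) * (1 - exp (-I * z ^ 3 * t) / (1 - 3 * z ^ 2 * t)))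
      (exp (I * z) * (1 - exp (-I * z ^ 3 * t)) / z
        - exp (I * z) / (I * z ^ 2) * (1 - exp (-I * z ^ 3 * t) / (1 - 3 * z ^ 2 * t))
        + 6 * I * t * (exp (I * z - I * z ^ 3 * t) / (1 - 3 * z ^ 2 * t) ^ 2)) z := by
  have hlin : HasDerivAt (fun z : ℂ => I * z) I z := by simpa using (hasDerivAt_id z).const_mul I
  have hcub : HasDerivAt (fun z : ℂ => -I * z ^ 3 * t) (-I * (3 * z ^ 2) * t) z := by
    simpa using ((hasDerivAt_pow 3 z).const_mul (-I)).mul_const t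
  have hden : HasDerivAt (fun z : ℂ => 1 - 3 * z ^ 2 * t) (-(3 * (2 * z) * t)) z := by
    simpa using (((hasDerivAt_pow 2 z).const_mul 3).mul_const t).const_sub 1
  have h := (((hlin.cexp).div hlin (mul_ne_zero I_ne_zero hz)).mul
    (((hcub.cexp).div hden hD).const_sub 1))
  refine h.congr_deriv ?_
  simp only [Pi.div_apply]
  rw [show I * z - I * z ^ 3 * t = I * z + -I * z ^ 3 * t by ring, exp_add]
  generalize exp (I * z) = E, exp (-I * z ^ 3 * t) = G
  -- `D` is made an atom so that `field_simp` can clear it; `subst` then restores its value.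
  generalize hDdef : 1 - 3 * z ^ 2 * t = D at hD ⊢
  field_simp
  subst hDdef
  ring_nf
  simp only [I_sq]
  ring

theorem integral_exp_mul_one_sub_exp_div_eq {t a b : ℝ} (h0 : ∀ x ∈ uIcc a b, x ≠ 0)
    (hD : ∀ x ∈ uIcc a b, 1 - 3 * x ^ 2 * t ≠ 0) :
    (∫ x in a..b, exp (I * x) * (1 - exp (-I * (x : ℂ) ^ 3 * t)) / x)
      = (exp (I * b) / (I * b) * (1 - exp (-I * (b : ℂ) ^ 3 * t) / (1 - 3 * (b : ℂ) ^ 2 * t))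
          - exp (I * a) / (I * a) * (1 - exp (-I * (a : ℂ) ^ 3 * t) / (1 - 3 * (a : ℂ) ^ 2 * t)))
        + (∫ x in a..b, exp (I * x) / (I * (x : ℂ) ^ 2)
            * (1 - exp (-I * (x : ℂ) ^ 3 * t) / (1 - 3 * (x : ℂ) ^ 2 * t)))
        - 6 * I * t *
            ∫ x in a..b, exp (I * x - I * (x : ℂ) ^ 3 * t) / (1 - 3 * (x : ℂ) ^ 2 * t) ^ 2 := by
  have h0' : ∀ x ∈ uIcc a b, (x : ℂ) ≠ 0 := fun x hx => ofReal_ne_zero.2 (h0 x hx)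
  have hD' : ∀ x ∈ uIcc a b, 1 - 3 * (x : ℂ) ^ 2 * t ≠ 0 := fun x hx => by
    exact_mod_cast hD x hx
  have hi₁ : IntervalIntegrable (fun x : ℝ => exp (I * x) * (1 - exp (-I * (x : ℂ) ^ 3 * t)) / x)
      volume a b :=
    (ContinuousOn.div (by fun_prop) (by fun_prop) h0').intervalIntegrable
  have hi₂ : IntervalIntegrable (fun x : ℝ => exp (I * x) / (I * (x : ℂ) ^ 2)
      * (1 - exp (-I * (x : ℂ) ^ 3 * t) / (1 - 3 * (x : ℂ) ^ 2 * t))) volume a b := by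
    refine (ContinuousOn.mul ?_ (continuousOn_const.sub ?_)).intervalIntegrable
    · exact .div (by fun_prop) (by fun_prop) fun x hx =>
        mul_ne_zero I_ne_zero (pow_ne_zero 2 (h0' x hx))
    · exact .div (by fun_prop) (by fun_prop) hD'
  have hi₃ : IntervalIntegrable
      (fun x : ℝ => exp (I * x - I * (x : ℂ) ^ 3 * t) / (1 - 3 * (x : ℂ) ^ 2 * t) ^ 2) volume a b :=
    (ContinuousOn.div (by fun_prop) (by fun_prop) fun x hx =>
      pow_ne_zero 2 (hD' x hx)).intervalIntegrable
  have hFTC := integral_eq_sub_of_hasDerivAt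
    (fun x hx =>
      (hasDerivAt_exp_div_mul_one_sub_exp_div (t := t) (h0' x hx) (hD' x hx)).comp_ofReal)
    ((hi₁.sub hi₂).add (hi₃.const_mul (6 * I * t)))
  rw [integral_add (hi₁.sub hi₂) (hi₃.const_mul _), integral_sub hi₁ hi₂,
    integral_const_mul] at hFTC
  linear_combination hFTC

lemma sq_mul_abs_le_quarter {t x : ℝ} (ht : 0 < |t|) (hx : 0 ≤ x) (hxT : x ≤ 1 / (2 * √|t|)) :
    x ^ 2 * |t| ≤ 1 / 4 := by
  have hs : 0 < √|t| := Real.sqrt_pos.2 ht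
  have hxs : x * √|t| ≤ 1 / 2 := by
    rw [le_div_iff₀ (by positivity)] at hxT; linarith
  calc x ^ 2 * |t| = (x * √|t|) ^ 2 := by rw [mul_pow, Real.sq_sqrt (abs_nonneg t)]
    _ ≤ (1 / 2) ^ 2 := by gcongr
    _ = 1 / 4 := by norm_num

lemma one_lt_one_div_two_mul_sqrt {s : ℝ} (hs : 0 < s) (h : s < 1 / 4) : 1 < 1 / (2 * √s) := by
  have : √s < 1 / 2 := (Real.sqrt_lt' (by norm_num)).2 (by linarith)
  rw [lt_div_iff₀ (by positivity)]; linarith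

/-- integration-by-parts identity, for `0 < |t| < 1/4` and
`T = 1/(2√|t|)`:
`∫_{1}^{T} e^{iλ}(1 − e^{−iλ³t}) λ⁻¹ dλ
  = [e^{iλ}(iλ)⁻¹(1 − e^{−iλ³t}(1−3λ²t)⁻¹)]_{λ=1}^{λ=T}
    + ∫_{1}^{T} e^{iλ}(iλ²)⁻¹(1 − e^{−iλ³t}(1−3λ²t)⁻¹) dλ
    − 6it ∫_{1}^{T} e^{iλ−iλ³t}(1−3λ²t)⁻² dλ`. -/
theorem stmt_11 (t : ℝ) (h1 : 0 < |t|) (h2 : |t| < 1 / 4) (T : ℝ)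
    (hT : T = 1 / (2 * Real.sqrt |t|)) :
    (∫ lam in (1 : ℝ)..T,
        Complex.exp (Complex.I * lam)
          * (1 - Complex.exp (-(Complex.I) * (lam : ℂ) ^ 3 * t)) / lam)
      = (Complex.exp (Complex.I * T) / (Complex.I * T)
            * (1 - Complex.exp (-(Complex.I) * (T : ℂ) ^ 3 * t)
                / (1 - 3 * (T : ℂ) ^ 2 * t))
          - Complex.exp (Complex.I * (1 : ℂ)) / (Complex.I * (1 : ℂ))
            * (1 - Complex.exp (-(Complex.I) * (1 : ℂ) ^ 3 * t)
                / (1 - 3 * (1 : ℂ) ^ 2 * t)))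
        + (∫ lam in (1 : ℝ)..T,
            Complex.exp (Complex.I * lam) / (Complex.I * (lam : ℂ) ^ 2)
              * (1 - Complex.exp (-(Complex.I) * (lam : ℂ) ^ 3 * t)
                  / (1 - 3 * (lam : ℂ) ^ 2 * t)))
        - 6 * Complex.I * t *
            ∫ lam in (1 : ℝ)..T,
              Complex.exp (Complex.I * lam - Complex.I * (lam : ℂ) ^ 3 * t)
                / (1 - 3 * (lam : ℂ) ^ 2 * t) ^ 2 := by
  subst hT
  have hT1 := one_lt_one_div_two_mul_sqrt h1 h2
  refine integral_exp_mul_one_sub_exp_div_eq (fun x hx => ?_) (fun x hx => ?_)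
  all_goals rw [uIcc_of_le hT1.le] at hx
  · exact (zero_lt_one.trans_le hx.1).ne'
  · have hquarter := sq_mul_abs_le_quarter h1 (zero_le_one.trans hx.1) hx.2
    nlinarith [le_abs_self t, sq_nonneg x]
end

section
/- The interval integrals P(t) := ∫_{1}^{1/(2√|t|)} e^{iλ}(iλ²)^{−1} ( 1 − e^{−iλ³ t}(1 − 3λ²t)^{−1} ) dλ, defined for real t with 0 < |t| < 1/4 (so that 1 − 3λ²t ≥ 1/4 on the interval of integration), satisfy P(t) → 0 as t → 0 through nonzero real values. -/
open Complex Filter intervalIntegral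

/-!
On the range of integration `λ ≤ 1/(2√|t|)`, i.e. `λ²|t| ≤ 1/4`, the denominator `1 - 3λ²t` is at
least `1/4`, so the integrand is bounded by `5/λ²`, which is integrable on `(1, ∞)`. As `t → 0`
the integrand tends to `0` pointwise (the bracket becomes `1 - 1`) while the upper limit tends
to `∞`, so dominated convergence on `(1, ∞)` gives `P(t) → 0`.
-/

open MeasureTheory Set Topology

section DominatedIoi

variable {E : Type*} [NormedAddCommGroup E] [NormedSpace ℝ E]

theorem tendsto_intervalIntegral_of_dominated_Ioi {ι : Type*} {l : Filter ι}
    [l.IsCountablyGenerated] {F : ι → ℝ → E} {f : ℝ → E} {bound : ℝ → ℝ} {a : ℝ} {b : ι → ℝ}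
    (hb : Tendsto b l atTop) (hF_meas : ∀ i, AEStronglyMeasurable (F i) (volume.restrict (Ioi a)))
    (h_bound : ∀ᶠ i in l, ∀ x ∈ Ioc a (b i), ‖F i x‖ ≤ bound x)
    (bound_integrable : IntegrableOn bound (Ioi a))
    (h_lim : ∀ x ∈ Ioi a, Tendsto (fun i => F i x) l (𝓝 (f x))) :
    Tendsto (fun i => ∫ x in a..b i, F i x) l (𝓝 (∫ x in Ioi a, f x)) := by
  have h_eq : ∀ᶠ i in l,
      ∫ x in Ioi a, (Ioc a (b i)).indicator (F i) x = ∫ x in a..b i, F i x := by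
    filter_upwards [hb.eventually_ge_atTop a] with i hi
    rw [integral_of_le hi, MeasureTheory.integral_indicator measurableSet_Ioc,
      Measure.restrict_restrict measurableSet_Ioc, Ioc_inter_Ioi, max_self]
  refine Tendsto.congr' h_eq (tendsto_integral_filter_of_dominated_convergence (‖bound ·‖)
    (Eventually.of_forall fun i => (hF_meas i).indicator measurableSet_Ioc) ?_
    bound_integrable.norm ?_)
  · filter_upwards [h_bound] with i hi
    refine ae_of_all _ fun x => ?_
    by_cases hx : x ∈ Ioc a (b i)
    · rw [indicator_of_mem hx]
      exact (hi x hx).trans (Real.le_norm_self _)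
    · rw [indicator_of_notMem hx, norm_zero]
      exact norm_nonneg _
  · filter_upwards [ae_restrict_mem measurableSet_Ioi] with x hx
    refine (h_lim x hx).congr' ?_
    filter_upwards [hb.eventually_ge_atTop x] with i hi
    exact (indicator_of_mem (show x ∈ Ioc a (b i) from ⟨hx, hi⟩) _).symm

end DominatedIoi

noncomputable def integrand (t x : ℝ) : ℂ :=
  Complex.exp (Complex.I * x) / (Complex.I * (x : ℂ) ^ 2)
    * (1 - Complex.exp (-(Complex.I) * (x : ℂ) ^ 3 * t) / (1 - 3 * (x : ℂ) ^ 2 * t))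

lemma sq_mul_abs_le_of_le_one_div_two_sqrt_abs {t x : ℝ} (hx : 0 ≤ x)
    (hxt : x ≤ 1 / (2 * √|t|)) : x ^ 2 * |t| ≤ 1 / 4 := by
  rcases eq_or_ne t 0 with rfl | ht
  · norm_num
  have hs : 0 < √|t| := Real.sqrt_pos.mpr (abs_pos.mpr ht)
  rw [le_div_iff₀ (by positivity)] at hxt
  have := pow_le_pow_left₀ (by positivity) hxt 2
  rw [mul_pow, mul_pow, Real.sq_sqrt (abs_nonneg t)] at this
  linarith

lemma norm_one_sub_exp_mul_I_div_le {θ d : ℝ} (hd : 0 < d) :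
    ‖1 - Complex.exp (θ * Complex.I) / d‖ ≤ 1 + d⁻¹ := by
  calc ‖1 - Complex.exp (θ * Complex.I) / d‖
      ≤ ‖(1 : ℂ)‖ + ‖Complex.exp (θ * Complex.I)‖ / ‖(d : ℂ)‖ := by
        rw [← norm_div]; exact norm_sub_le _ _
    _ = 1 + d⁻¹ := by
        rw [norm_one, Complex.norm_exp_ofReal_mul_I, Complex.norm_real, Real.norm_of_nonneg hd.le,
          one_div]

lemma norm_integrand_le {t x : ℝ} (hx : 1 ≤ x) (hxt : x ^ 2 * |t| ≤ 1 / 4) :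
    ‖integrand t x‖ ≤ 5 / x ^ 2 := by
  have hd : 1 / 4 ≤ 1 - 3 * x ^ 2 * t := by nlinarith [le_abs_self t, sq_nonneg x]
  have h_prefactor : ‖Complex.exp (Complex.I * x) / (Complex.I * (x : ℂ) ^ 2)‖ = 1 / x ^ 2 := by
    rw [norm_div, mul_comm, Complex.norm_exp_ofReal_mul_I, norm_mul, Complex.norm_I, one_mul,
      norm_pow, Complex.norm_real, Real.norm_of_nonneg (by linarith)]
  have h_factor : ‖1 - Complex.exp (-(Complex.I) * (x : ℂ) ^ 3 * t)
      / (1 - 3 * (x : ℂ) ^ 2 * t)‖ ≤ 5 := by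
    have h := norm_one_sub_exp_mul_I_div_le (θ := -(x ^ 3 * t)) (d := 1 - 3 * x ^ 2 * t)
      (by linarith)
    have h_inv : (1 - 3 * x ^ 2 * t)⁻¹ ≤ 4 := by
      rw [inv_le_comm₀ (by linarith) four_pos]; linarith
    push_cast at h
    rw [show -(Complex.I) * (x : ℂ) ^ 3 * t = -((x : ℂ) ^ 3 * t) * Complex.I by ring]
    linarith
  rw [integrand, norm_mul, h_prefactor]
  calc 1 / x ^ 2 * ‖_‖ ≤ 1 / x ^ 2 * 5 := by gcongr
    _ = 5 / x ^ 2 := by ring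

lemma tendsto_integrand_zero (x : ℝ) : Tendsto (integrand · x) (𝓝 0) (𝓝 0) := by
  have h : ContinuousAt (integrand · x) 0 := by
    unfold integrand
    fun_prop (disch := simp)
  simpa [integrand] using h.tendsto

lemma integrableOn_Ioi_const_div_sq (c : ℝ) : IntegrableOn (fun x : ℝ => c / x ^ 2) (Ioi 1) := by
  refine IntegrableOn.congr_fun
    ((integrableOn_Ioi_rpow_of_lt (by norm_num : (-2 : ℝ) < -1) one_pos).const_mul c)
    (fun x hx => ?_) measurableSet_Ioi
  rw [Real.rpow_neg (by linarith [mem_Ioi.mp hx]), Real.rpow_two, div_eq_mul_inv]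

lemma tendsto_one_div_two_sqrt_abs : Tendsto (fun t : ℝ => 1 / (2 * √|t|)) (𝓝[≠] 0) atTop := by
  simp only [one_div]
  refine Tendsto.inv_tendsto_nhdsGT_zero (tendsto_nhdsWithin_iff.mpr ⟨?_, ?_⟩)
  · simpa using (((continuous_abs.sqrt).const_mul 2).tendsto 0).mono_left nhdsWithin_le_nhds
  · filter_upwards [self_mem_nhdsWithin] with t ht
    exact mul_pos two_pos (Real.sqrt_pos.mpr (abs_pos.mpr ht))

/-- `P(t) := ∫_{1}^{1/(2√|t|)} e^{iλ}(iλ²)⁻¹(1 − e^{−iλ³t}(1−3λ²t)⁻¹) dλ → 0`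
as `t → 0` through real values with `0 < |t| < 1/4`. -/
theorem stmt_13 :
    Tendsto (fun t : ℝ =>
        ∫ lam in (1 : ℝ)..(1 / (2 * Real.sqrt |t|)),
          Complex.exp (Complex.I * lam) / (Complex.I * (lam : ℂ) ^ 2)
            * (1 - Complex.exp (-(Complex.I) * (lam : ℂ) ^ 3 * t)
                / (1 - 3 * (lam : ℂ) ^ 2 * t)))
      (nhdsWithin 0 {t : ℝ | t ≠ 0 ∧ |t| < 1 / 4}) (nhds 0) := by
  have hl : 𝓝[{t : ℝ | t ≠ 0 ∧ |t| < 1 / 4}] 0 ≤ 𝓝[≠] 0 :=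
    nhdsWithin_mono _ fun t ht => ht.1
  have h := tendsto_intervalIntegral_of_dominated_Ioi (f := 0) (F := integrand)
    (tendsto_one_div_two_sqrt_abs.mono_left hl)
    (fun t => by unfold integrand; fun_prop)
    (Eventually.of_forall fun t x hx => norm_integrand_le hx.1.le
      (sq_mul_abs_le_of_le_one_div_two_sqrt_abs (by linarith [hx.1]) hx.2))
    (integrableOn_Ioi_const_div_sq 5)
    (fun x _ => (tendsto_integrand_zero x).mono_left nhdsWithin_le_nhds)
  simpa [integrand] using h
end

section
/- The interval integrals I₁(t) := ∫_{1}^{1/(2√|t|)} e^{iλ}(1 − e^{iλ³ t}) λ^{−1} dλ, defined for real t with 0 < |t| < 1/4, satisfy I₁(t) → 0 as t → 0 through nonzero real values. -/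
open Complex Filter intervalIntegral

/-!
Split the range of integration at `M = |t|^(-1/4)`. On `[1, M]` we have
`|1 - e^{iλ³t}| ≤ λ³|t|`, so that piece is at most `M³|t|`. On `[M, 1/(2√|t|)]` the integrand is
`e^{iφ₀}/λ - e^{iφ_t}/λ` for the cubic phases `φ_c(λ) = λ + cλ³`, whose derivative stays in
`[1/4, 7/4]` because `|t|λ² ≤ 1/4` there; one integration by parts against `d(e^{iφ_c})` bounds
each term by `O(1/M)`. Both pieces are `O(|t|^(1/4))`.
-/

open MeasureTheory Set

theorem norm_integral_mul_deriv_mul_exp_le {a b : ℝ} (hab : a ≤ b) {h h' : ℝ → ℂ}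
    {φ φ' : ℝ → ℝ} (hh : ∀ x ∈ Icc a b, HasDerivAt h (h' x) x)
    (hφ : ∀ x ∈ Icc a b, HasDerivAt φ (φ' x) x)
    (hh' : ContinuousOn h' (Icc a b)) (hφ' : ContinuousOn φ' (Icc a b)) :
    ‖∫ x in a..b, h x * φ' x * cexp (I * φ x)‖ ≤ ‖h a‖ + ‖h b‖ + ∫ x in a..b, ‖h' x‖ := by
  set v : ℝ → ℂ := fun x => -I * cexp (I * φ x)
  have hv_norm (x : ℝ) : ‖v x‖ = 1 := by simp [v, norm_exp_I_mul_ofReal]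
  have hv (x : ℝ) (hx : x ∈ Icc a b) : HasDerivAt v (φ' x * cexp (I * φ x)) x := by
    refine ((((hφ x hx).ofReal_comp.const_mul I).cexp).const_mul (-I)).congr_deriv ?_
    linear_combination (-(φ' x * cexp (I * φ x))) * I_sq
  have hφc : ContinuousOn φ (Icc a b) := fun x hx => (hφ x hx).continuousAt.continuousWithinAt
  have hv'c : ContinuousOn (fun x => (φ' x : ℂ) * cexp (I * φ x)) (Icc a b) := by
    have := continuous_ofReal.comp_continuousOn hφc
    have := continuous_ofReal.comp_continuousOn hφ'
    fun_prop
  have hibp := integral_mul_deriv_eq_deriv_mul (fun x hx => hh x (uIcc_of_le hab ▸ hx))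
    (fun x hx => hv x (uIcc_of_le hab ▸ hx)) (hh'.intervalIntegrable_of_Icc hab)
    (hv'c.intervalIntegrable_of_Icc hab)
  simp only [← mul_assoc] at hibp
  rw [hibp]
  calc _ ≤ ‖h b * v b‖ + ‖h a * v a‖ + ‖∫ x in a..b, h' x * v x‖ :=
        (norm_sub_le _ _).trans (add_le_add_left (norm_sub_le _ _) _)
    _ ≤ ‖h b‖ + ‖h a‖ + ∫ x in a..b, ‖h' x‖ := by
        simp only [norm_mul, hv_norm, mul_one]
        gcongr
        exact (intervalIntegral.norm_integral_le_integral_norm hab).trans_eq (by simp [hv_norm])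
    _ = _ := by ring

theorem integral_le_div_sub_div_of_le_div_sq {f : ℝ → ℝ} {a b C : ℝ} (ha : 0 < a) (hab : a ≤ b)
    (hf : IntegrableOn f (Icc a b)) (hle : ∀ x ∈ Ioo a b, f x ≤ C / x ^ 2) :
    ∫ x in a..b, f x ≤ C / a - C / b := by
  have hpos : ∀ x ∈ Icc a b, 0 < x := fun x hx => ha.trans_le hx.1
  have := integral_le_sub_of_hasDeriv_right_of_le (g := fun x => -(C * x⁻¹)) hab
    (fun x hx => ((continuousAt_inv₀ (hpos x hx).ne').const_mul C).neg.continuousWithinAt)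
    (fun x hx =>
      (((hasDerivAt_inv (hpos x (Ioo_subset_Icc_self hx)).ne').const_mul C).neg).hasDerivWithinAt)
    hf (fun x hx => (hle x hx).trans_eq (by ring))
  simpa [div_eq_mul_inv, sub_eq_add_neg, add_comm] using this

theorem div_four_le_mul_one_add_three_mul_mul_sq {c x : ℝ} (hx : 0 ≤ x)
    (h : 4 * |c| * x ^ 2 ≤ 1) : x / 4 ≤ x * (1 + 3 * c * x ^ 2) := by
  nlinarith [neg_abs_le c, sq_nonneg x, mul_nonneg hx (sq_nonneg x)]

theorem abs_one_add_nine_mul_mul_sq_le {c x : ℝ} (h : 4 * |c| * x ^ 2 ≤ 1) :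
    |1 + 9 * c * x ^ 2| ≤ 13 / 4 := by
  rw [abs_le]; constructor <;> nlinarith [neg_abs_le c, le_abs_self c, sq_nonneg x]

theorem norm_integral_exp_cubic_div_le {a b c : ℝ} (ha : 0 < a) (hab : a ≤ b)
    (hc : 4 * |c| * b ^ 2 ≤ 1) :
    ‖∫ x in a..b, cexp (I * ↑(x + c * x ^ 3)) / x‖ ≤ 60 / a := by
  have hpos : ∀ x ∈ Icc a b, 0 < x := fun x hx => ha.trans_le hx.1
  have hcx : ∀ x ∈ Icc a b, 4 * |c| * x ^ 2 ≤ 1 := fun x hx =>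
    le_trans (by gcongr; exacts [(hpos x hx).le, hx.2]) hc
  have hq_ge : ∀ x ∈ Icc a b, x / 4 ≤ x * (1 + 3 * c * x ^ 2) := fun x hx =>
    div_four_le_mul_one_add_three_mul_mul_sq (hpos x hx).le (hcx x hx)
  have hq_ne : ∀ x ∈ Icc a b, x * (1 + 3 * c * x ^ 2) ≠ 0 := fun x hx =>
    (lt_of_lt_of_le (by linarith [hpos x hx]) (hq_ge x hx)).ne'
  have hq (x : ℝ) : HasDerivAt (fun y => y * (1 + 3 * c * y ^ 2)) (1 + 9 * c * x ^ 2) x :=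
    ((hasDerivAt_id x).mul (((hasDerivAt_pow 2 x).const_mul (3 * c)).const_add 1)).congr_deriv
      (by simp; ring)
  have hφ (x : ℝ) : HasDerivAt (fun y => y + c * y ^ 3) (1 + 3 * c * x ^ 2) x :=
    ((hasDerivAt_id x).add ((hasDerivAt_pow 3 x).const_mul c)).congr_deriv (by simp; ring)
  set h : ℝ → ℂ := fun x => ((x * (1 + 3 * c * x ^ 2))⁻¹ : ℝ)
  set h' : ℝ → ℝ := fun x => -(1 + 9 * c * x ^ 2) / (x * (1 + 3 * c * x ^ 2)) ^ 2
  have hh : ∀ x ∈ Icc a b, HasDerivAt h (h' x) x := fun x hx =>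
    ((hq x).inv (hq_ne x hx)).ofReal_comp
  have hh'c : ContinuousOn (fun x => (h' x : ℂ)) (Icc a b) :=
    continuous_ofReal.comp_continuousOn <| ContinuousOn.div (by fun_prop) (by fun_prop)
      fun x hx => pow_ne_zero 2 (hq_ne x hx)
  have hrepr : ∫ x in a..b, cexp (I * ↑(x + c * x ^ 3)) / x
      = ∫ x in a..b, h x * ((1 + 3 * c * x ^ 2 : ℝ) : ℂ) * cexp (I * ↑(x + c * x ^ 3)) := by
    refine integral_congr fun x hx => ?_
    rw [uIcc_of_le hab] at hx
    have : (x * (1 + 3 * c * x ^ 2))⁻¹ * (1 + 3 * c * x ^ 2) = x⁻¹ := by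
      rw [mul_inv, mul_assoc, inv_mul_cancel₀ (right_ne_zero_of_mul (hq_ne x hx)), mul_one]
    rw [div_eq_inv_mul, ← ofReal_inv, ← this, ofReal_mul]
  have hh_le : ∀ x ∈ Icc a b, ‖h x‖ ≤ 4 / x := fun x hx => by
    have hx4 : 0 < x / 4 := by linarith [hpos x hx]
    rw [norm_real, Real.norm_eq_abs, abs_inv, abs_of_pos (hx4.trans_le (hq_ge x hx)),
      ← one_div_div x 4, one_div]
    exact inv_anti₀ hx4 (hq_ge x hx)
  have hh'_le : ∀ x ∈ Icc a b, ‖(h' x : ℂ)‖ ≤ 52 / x ^ 2 := fun x hx => by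
    have hx4 : 0 < x / 4 := by linarith [hpos x hx]
    rw [norm_real, Real.norm_eq_abs, abs_div, abs_neg, abs_pow]
    calc |1 + 9 * c * x ^ 2| / |x * (1 + 3 * c * x ^ 2)| ^ 2 ≤ (13 / 4) / (x / 4) ^ 2 := by
          gcongr
          · exact abs_one_add_nine_mul_mul_sq_le (hcx x hx)
          · exact (hq_ge x hx).trans (le_abs_self _)
      _ = 52 / x ^ 2 := by ring
  have hint := integral_le_div_sub_div_of_le_div_sq ha hab hh'c.norm.integrableOn_Icc
    fun x hx => hh'_le x (Ioo_subset_Icc_self hx)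
  rw [hrepr]
  refine (norm_integral_mul_deriv_mul_exp_le hab hh (fun x _ => hφ x) hh'c (by fun_prop)).trans ?_
  have := hh_le a ⟨le_rfl, hab⟩
  have := hh_le b ⟨hab, le_rfl⟩
  have : 4 / b ≤ 4 / a := div_le_div_of_nonneg_left (by norm_num) ha hab
  have : 0 < 52 / b := div_pos (by norm_num) (ha.trans_le hab)
  linarith [show 60 / a = 4 / a + 4 / a + 52 / a by ring]

theorem intervalIntegrable_exp_cubic_div {a b : ℝ} (c : ℝ) (ha : 0 < a) (hab : a ≤ b) :
    IntervalIntegrable (fun x : ℝ => cexp (I * ↑(x + c * x ^ 3)) / x) volume a b :=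
  ContinuousOn.intervalIntegrable_of_Icc hab <| ContinuousOn.div (by fun_prop) (by fun_prop)
    fun x hx => ofReal_ne_zero.2 (ha.trans_le hx.1).ne'

theorem intervalIntegrable_exp_mul_one_sub_exp_cube_div {a b : ℝ} (t : ℝ) (ha : 0 < a)
    (hab : a ≤ b) :
    IntervalIntegrable (fun x : ℝ => cexp (I * x) * (1 - cexp (I * x ^ 3 * t)) / x) volume a b :=
  ContinuousOn.intervalIntegrable_of_Icc hab <| ContinuousOn.div (by fun_prop) (by fun_prop)
    fun x hx => ofReal_ne_zero.2 (ha.trans_le hx.1).ne'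

theorem norm_integral_exp_mul_one_sub_exp_cube_le_pow_mul {M t : ℝ} (hM : 1 ≤ M) :
    ‖∫ x in (1 : ℝ)..M, cexp (I * x) * (1 - cexp (I * x ^ 3 * t)) / x‖ ≤ M ^ 3 * |t| := by
  have hbound : ∀ x ∈ uIoc (1 : ℝ) M,
      ‖cexp (I * x) * (1 - cexp (I * x ^ 3 * t)) / x‖ ≤ M ^ 2 * |t| := fun x hx => by
    rw [uIoc_of_le hM] at hx
    have hx0 : 0 < x := by linarith [hx.1]
    have hphase : ‖1 - cexp (I * x ^ 3 * t)‖ ≤ x ^ 3 * |t| := by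
      rw [norm_sub_rev, show I * (x : ℂ) ^ 3 * t = I * ↑(x ^ 3 * t) by push_cast; ring]
      refine Real.norm_exp_I_mul_ofReal_sub_one_le.trans_eq ?_
      rw [Real.norm_eq_abs, abs_mul, abs_of_pos (pow_pos hx0 3)]
    rw [norm_div, norm_mul, norm_exp_I_mul_ofReal, one_mul, norm_real, Real.norm_eq_abs,
      abs_of_pos hx0, div_le_iff₀ hx0]
    calc _ ≤ x ^ 3 * |t| := hphase
      _ = x ^ 2 * |t| * x := by ring
      _ ≤ M ^ 2 * |t| * x := by gcongr; exact hx.2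
  refine (norm_integral_le_of_norm_le_const hbound).trans ?_
  rw [abs_of_nonneg (sub_nonneg.2 hM)]
  nlinarith [abs_nonneg t, sq_nonneg M]

theorem norm_integral_exp_mul_one_sub_exp_cube_le_div {a b t : ℝ} (ha : 0 < a) (hab : a ≤ b)
    (ht : 4 * |t| * b ^ 2 ≤ 1) :
    ‖∫ x in a..b, cexp (I * x) * (1 - cexp (I * x ^ 3 * t)) / x‖ ≤ 120 / a := by
  have hsplit : ∫ x in a..b, cexp (I * x) * (1 - cexp (I * x ^ 3 * t)) / x
      = (∫ x in a..b, cexp (I * ((x + 0 * x ^ 3 : ℝ) : ℂ)) / x)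
        - ∫ x in a..b, cexp (I * ((x + t * x ^ 3 : ℝ) : ℂ)) / x := by
    rw [← integral_sub (intervalIntegrable_exp_cubic_div 0 ha hab)
      (intervalIntegrable_exp_cubic_div t ha hab)]
    refine integral_congr fun x _ => ?_
    simp only [zero_mul, add_zero, ofReal_add, ofReal_mul, ofReal_pow, mul_add, Complex.exp_add]
    rw [show I * (x : ℂ) ^ 3 * t = I * (t * x ^ 3) by ring]
    ring
  rw [hsplit]
  refine (norm_sub_le _ _).trans ?_
  have h0 := norm_integral_exp_cubic_div_le (c := 0) ha hab (by simp)
  have ht := norm_integral_exp_cubic_div_le ha hab ht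
  linarith [show 120 / a = 60 / a + 60 / a by ring]

theorem norm_integral_exp_mul_one_sub_exp_cube_le_sqrt_sqrt {t : ℝ} (ht0 : t ≠ 0)
    (ht : |t| ≤ 1 / 16) :
    ‖∫ x in (1 : ℝ)..(1 / (2 * √|t|)), cexp (I * x) * (1 - cexp (I * x ^ 3 * t)) / x‖
      ≤ 121 * √√|t| := by
  set ρ := √√|t|
  have hρ : 0 < ρ := Real.sqrt_pos.2 (Real.sqrt_pos.2 (abs_pos.2 ht0))
  have hρ2 : √|t| = ρ ^ 2 := (Real.sq_sqrt (Real.sqrt_nonneg _)).symm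
  have hρ4 : |t| = ρ ^ 4 := by rw [← Real.sq_sqrt (abs_nonneg t), hρ2]; ring
  have hρ_le : ρ ≤ 1 / 2 := by
    by_contra! h
    have : (1 / 2 : ℝ) ^ 4 < ρ ^ 4 := by gcongr
    linarith
  have hM : 1 ≤ ρ⁻¹ := one_le_inv₀ hρ |>.2 (by linarith)
  have hML : ρ⁻¹ ≤ 1 / (2 * ρ ^ 2) := by
    rw [one_div, inv_le_inv₀ hρ (by positivity)]; nlinarith
  rw [hρ2, ← integral_add_adjacent_intervals
    (intervalIntegrable_exp_mul_one_sub_exp_cube_div t one_pos hM)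
    (intervalIntegrable_exp_mul_one_sub_exp_cube_div t (by positivity) hML)]
  refine (norm_add_le _ _).trans ?_
  have hhead := norm_integral_exp_mul_one_sub_exp_cube_le_pow_mul (t := t) hM
  have htail := norm_integral_exp_mul_one_sub_exp_cube_le_div (t := t) (by positivity) hML
    (by rw [hρ4]; field_simp; norm_num)
  rw [hρ4] at hhead
  rw [div_inv_eq_mul] at htail
  have : ρ⁻¹ ^ 3 * ρ ^ 4 = ρ := by field_simp
  linarith

/-- `I₁(t) := ∫_{1}^{1/(2√|t|)} e^{iλ}(1 − e^{iλ³t}) λ⁻¹ dλ → 0`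
as `t → 0` through nonzero real values with `|t| < 1/4`. -/
theorem stmt_15 :
    Tendsto (fun t : ℝ =>
        ∫ lam in (1 : ℝ)..(1 / (2 * Real.sqrt |t|)),
          Complex.exp (Complex.I * lam)
            * (1 - Complex.exp (Complex.I * (lam : ℂ) ^ 3 * t)) / lam)
      (nhdsWithin 0 {t : ℝ | t ≠ 0 ∧ |t| < 1 / 4}) (nhds 0) := by
  have hsmall : ∀ᶠ t : ℝ in nhds 0, |t| ≤ 1 / 16 := by
    filter_upwards [Metric.closedBall_mem_nhds (0 : ℝ) (by norm_num : (0 : ℝ) < 1 / 16)]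
      with t ht
    simpa using ht
  refine squeeze_zero_norm' ?_ (a := fun t : ℝ => 121 * √√|t|) ?_
  · filter_upwards [self_mem_nhdsWithin, nhdsWithin_le_nhds hsmall] with t ht ht'
    exact norm_integral_exp_mul_one_sub_exp_cube_le_sqrt_sqrt ht.1 ht'
  · have : Continuous fun t : ℝ => 121 * √√|t| := by fun_prop
    simpa using (this.tendsto 0).mono_left nhdsWithin_le_nhds
end

section
/- For every real t with 0 < |t| ≤ 1, the function λ ↦ e^{iλ}(iλ²)^{−1} ( 1 − e^{−iλ³ t}(1 − 3λ²t)^{−1} ) is Lebesgue integrable on [1/√|t|, ∞) (its denominators are nonzero there since |1 − 3λ²t| ≥ 2 for λ ≥ 1/√|t|), and | ∫_{1/√|t|}^{∞} e^{iλ}(iλ²)^{−1} ( 1 − e^{−iλ³ t}(1 − 3λ²t)^{−1} ) dλ | ≤ (3/2)√|t|. -/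
open Complex MeasureTheory Set

/- Since `|1 - 3λ²t| ≥ 2` on `[1/√|t|, ∞)`, the integrand has modulus at most `(3/2) λ⁻²` there,
and `∫_{1/√|t|}^∞ λ⁻² dλ = √|t|`. -/

section InverseSquareTail

variable {a : ℝ}

lemma integrableOn_Ici_rpow_neg_two (ha : 0 < a) :
    IntegrableOn (fun x : ℝ => x ^ (-2 : ℝ)) (Ici a) :=
  (integrableOn_Ici_iff_integrableOn_Ioi).2 (integrableOn_Ioi_rpow_of_lt (by norm_num) ha)

lemma integral_Ici_rpow_neg_two (ha : 0 < a) : ∫ x in Ici a, x ^ (-2 : ℝ) = a⁻¹ := by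
  rw [integral_Ici_eq_integral_Ioi, integral_Ioi_rpow_of_lt (by norm_num) ha]
  norm_num [Real.rpow_neg_one]

variable {E : Type*} [NormedAddCommGroup E] {f : ℝ → E} {C : ℝ}

lemma integrableOn_Ici_of_norm_le_mul_rpow_neg_two (ha : 0 < a)
    (hf : AEStronglyMeasurable f (volume.restrict (Ici a)))
    (hb : ∀ x ∈ Ici a, ‖f x‖ ≤ C * x ^ (-2 : ℝ)) : IntegrableOn f (Ici a) :=
  ((integrableOn_Ici_rpow_neg_two ha).const_mul C).mono' hf
    ((ae_restrict_iff' measurableSet_Ici).2 (.of_forall hb))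

lemma norm_integral_Ici_le_of_norm_le_mul_rpow_neg_two [NormedSpace ℝ E] (ha : 0 < a)
    (hb : ∀ x ∈ Ici a, ‖f x‖ ≤ C * x ^ (-2 : ℝ)) : ‖∫ x in Ici a, f x‖ ≤ C / a := by
  calc ‖∫ x in Ici a, f x‖ ≤ ∫ x in Ici a, C * x ^ (-2 : ℝ) :=
        norm_integral_le_of_norm_le ((integrableOn_Ici_rpow_neg_two ha).const_mul C)
          ((ae_restrict_iff' measurableSet_Ici).2 (.of_forall hb))
    _ = C / a := by rw [integral_const_mul, integral_Ici_rpow_neg_two ha, div_eq_mul_inv]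

end InverseSquareTail

lemma one_le_sq_mul_of_inv_sqrt_le {c x : ℝ} (hc : 0 < c) (hx : 1 / √c ≤ x) : 1 ≤ x ^ 2 * c := by
  have hx2 : (1 / √c) ^ 2 ≤ x ^ 2 := pow_le_pow_left₀ (by positivity) hx 2
  rwa [div_pow, one_pow, Real.sq_sqrt hc.le, div_le_iff₀ hc] at hx2

lemma two_le_abs_one_sub_three_mul {s : ℝ} (hs : 1 ≤ |s|) : 2 ≤ |1 - 3 * s| := by
  have := abs_sub_abs_le_abs_sub (3 * s) 1
  rw [abs_sub_comm, abs_mul, abs_one, abs_of_pos (by norm_num : (0 : ℝ) < 3)] at this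
  linarith

lemma norm_one_sub_exp_div_le {x t : ℝ} (h : 1 ≤ x ^ 2 * |t|) :
    ‖1 - exp (-I * (x : ℂ) ^ 3 * t) / (1 - 3 * (x : ℂ) ^ 2 * t)‖ ≤ 3 / 2 := by
  have hexp : ‖exp (-I * (x : ℂ) ^ 3 * t)‖ = 1 := by
    rw [show -I * (x : ℂ) ^ 3 * t = ((-(x ^ 3 * t) : ℝ) : ℂ) * I by push_cast; ring]
    exact norm_exp_ofReal_mul_I _
  have hden : 2 ≤ ‖1 - 3 * (x : ℂ) ^ 2 * t‖ := by
    rw [show 1 - 3 * (x : ℂ) ^ 2 * t = ((1 - 3 * (x ^ 2 * t) : ℝ) : ℂ) by push_cast; ring,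
      norm_real, Real.norm_eq_abs]
    exact two_le_abs_one_sub_three_mul (by rwa [abs_mul, abs_of_nonneg (sq_nonneg x)])
  calc ‖1 - exp (-I * (x : ℂ) ^ 3 * t) / (1 - 3 * (x : ℂ) ^ 2 * t)‖
      ≤ ‖(1 : ℂ)‖ + ‖exp (-I * (x : ℂ) ^ 3 * t)‖ / ‖1 - 3 * (x : ℂ) ^ 2 * t‖ := by
        rw [← norm_div]; exact norm_sub_le _ _
    _ ≤ 1 + 1 / 2 := by
        rw [norm_one, hexp]
        gcongr
    _ = 3 / 2 := by norm_num

lemma norm_exp_I_mul_div_I_mul_sq (x : ℝ) :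
    ‖exp (I * x) / (I * (x : ℂ) ^ 2)‖ = x ^ (-2 : ℝ) := by
  rw [norm_div, norm_exp_I_mul_ofReal, norm_mul, norm_I, one_mul, norm_pow, norm_real,
    Real.norm_eq_abs, sq_abs, Real.rpow_neg_ofNat, zpow_neg, zpow_ofNat, one_div]

theorem stmt_17_general (t : ℝ) (h1 : 0 < |t|) :
    IntegrableOn (fun lam : ℝ =>
        Complex.exp (Complex.I * lam) / (Complex.I * (lam : ℂ) ^ 2)
          * (1 - Complex.exp (-(Complex.I) * (lam : ℂ) ^ 3 * t)
              / (1 - 3 * (lam : ℂ) ^ 2 * t)))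
      (Set.Ici (1 / Real.sqrt |t|)) ∧
    ‖∫ lam in Set.Ici (1 / Real.sqrt |t|),
        Complex.exp (Complex.I * lam) / (Complex.I * (lam : ℂ) ^ 2)
          * (1 - Complex.exp (-(Complex.I) * (lam : ℂ) ^ 3 * t)
              / (1 - 3 * (lam : ℂ) ^ 2 * t))‖
      ≤ (3 / 2) * Real.sqrt |t| := by
  have ha : 0 < 1 / √|t| := by positivity
  have hb : ∀ lam ∈ Ici (1 / √|t|),
      ‖exp (I * lam) / (I * (lam : ℂ) ^ 2)
          * (1 - exp (-I * (lam : ℂ) ^ 3 * t) / (1 - 3 * (lam : ℂ) ^ 2 * t))‖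
        ≤ 3 / 2 * lam ^ (-2 : ℝ) := fun lam hlam => by
    rw [norm_mul, norm_exp_I_mul_div_I_mul_sq, mul_comm (3 / 2)]
    exact mul_le_mul_of_nonneg_left
      (norm_one_sub_exp_div_le (one_le_sq_mul_of_inv_sqrt_le h1 hlam))
      (Real.rpow_nonneg (ha.trans_le hlam).le _)
  refine ⟨integrableOn_Ici_of_norm_le_mul_rpow_neg_two ha (by fun_prop) hb, ?_⟩
  simpa [div_div_eq_mul_div] using norm_integral_Ici_le_of_norm_le_mul_rpow_neg_two ha hb

/-- for `0 < |t| ≤ 1`, the function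
`λ ↦ e^{iλ}(iλ²)⁻¹(1 − e^{−iλ³t}(1−3λ²t)⁻¹)` is Lebesgue integrable on `[1/√|t|, ∞)`,
and the modulus of its integral there is at most `(3/2)√|t|`. -/
theorem stmt_17 (t : ℝ) (h1 : 0 < |t|) (h2 : |t| ≤ 1) :
    IntegrableOn (fun lam : ℝ =>
        Complex.exp (Complex.I * lam) / (Complex.I * (lam : ℂ) ^ 2)
          * (1 - Complex.exp (-(Complex.I) * (lam : ℂ) ^ 3 * t)
              / (1 - 3 * (lam : ℂ) ^ 2 * t)))
      (Set.Ici (1 / Real.sqrt |t|)) ∧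
    ‖∫ lam in Set.Ici (1 / Real.sqrt |t|),
        Complex.exp (Complex.I * lam) / (Complex.I * (lam : ℂ) ^ 2)
          * (1 - Complex.exp (-(Complex.I) * (lam : ℂ) ^ 3 * t)
              / (1 - 3 * (lam : ℂ) ^ 2 * t))‖
      ≤ (3 / 2) * Real.sqrt |t| :=
  stmt_17_general t h1
end

section
/- For every real t with 0 < |t| ≤ 1, the function λ ↦ e^{iλ − iλ³ t}(1 − 3λ²t)^{−2} is Lebesgue integrable on [1/√|t|, ∞) (the denominator is nonzero there since |1 − 3λ²t| ≥ 2λ²|t| for λ ≥ 1/√|t|), and | 6it ∫_{1/√|t|}^{∞} e^{iλ − iλ³ t}(1 − 3λ²t)^{−2} dλ | ≤ (1/2)√|t|. -/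
open Complex MeasureTheory

/-!
On `[1/√|t|, ∞)` we have `λ²|t| ≥ 1`, hence `|1 - 3λ²t| ≥ 3λ²|t| - 1 ≥ 2λ²|t|`, so the
integrand, whose numerator has modulus one, is bounded by `(4t²)⁻¹ λ⁻⁴`. Integrating this
majorant gives `(4t²)⁻¹ (1/√|t|)⁻³ / 3 = √|t| / (12|t|)`, and the factor `6|t|` turns it
into `√|t| / 2`.
-/

section RpowMajorant

variable {E : Type*} [NormedAddCommGroup E] {f : ℝ → E} {a C r : ℝ}

theorem integrableOn_Ici_const_mul_rpow (ha : 0 < a) (hr : r < -1) :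
    IntegrableOn (fun x : ℝ => C * x ^ r) (Set.Ici a) := by
  rw [integrableOn_Ici_iff_integrableOn_Ioi]
  exact (integrableOn_Ioi_rpow_of_lt hr ha).const_mul C

theorem integrableOn_Ici_of_norm_le_rpow (ha : 0 < a) (hr : r < -1)
    (hf : AEStronglyMeasurable f (volume.restrict (Set.Ici a)))
    (hbound : ∀ x ∈ Set.Ici a, ‖f x‖ ≤ C * x ^ r) : IntegrableOn f (Set.Ici a) :=
  Integrable.mono' (integrableOn_Ici_const_mul_rpow ha hr) hf
    ((ae_restrict_iff' measurableSet_Ici).2 (.of_forall hbound))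

theorem norm_setIntegral_Ici_le_of_norm_le_rpow [NormedSpace ℝ E] (ha : 0 < a) (hr : r < -1)
    (hbound : ∀ x ∈ Set.Ici a, ‖f x‖ ≤ C * x ^ r) :
    ‖∫ x in Set.Ici a, f x‖ ≤ C * (-a ^ (r + 1) / (r + 1)) := by
  calc ‖∫ x in Set.Ici a, f x‖ ≤ ∫ x in Set.Ici a, C * x ^ r :=
        norm_integral_le_of_norm_le (integrableOn_Ici_const_mul_rpow ha hr)
          ((ae_restrict_iff' measurableSet_Ici).2 (.of_forall hbound))
    _ = C * (-a ^ (r + 1) / (r + 1)) := by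
        rw [setIntegral_congr_set Ioi_ae_eq_Ici.symm, integral_const_mul,
          integral_Ioi_rpow_of_lt hr ha]

end RpowMajorant

theorem two_mul_abs_le_abs_one_sub_three_mul {s : ℝ} (hs : 1 ≤ |s|) :
    2 * |s| ≤ |1 - 3 * s| := by
  cases abs_cases s <;> cases abs_cases (1 - 3 * s) <;> linarith

theorem one_le_sq_mul_abs_of_inv_sqrt_le {t x : ℝ} (ht : 0 < |t|) (hx : 1 / Real.sqrt |t| ≤ x) :
    1 ≤ x ^ 2 * |t| := by
  have hsqrt : 0 < Real.sqrt |t| := Real.sqrt_pos.2 ht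
  have hx' : 1 ≤ x * Real.sqrt |t| := by rwa [div_le_iff₀ hsqrt] at hx
  calc (1 : ℝ) ≤ (x * Real.sqrt |t|) ^ 2 := one_le_pow₀ hx'
    _ = x ^ 2 * |t| := by rw [mul_pow, Real.sq_sqrt ht.le]

theorem norm_exp_div_one_sub_sq_le {t x : ℝ} (ht : 0 < |t|) (hx : 1 / Real.sqrt |t| ≤ x) :
    ‖Complex.exp (Complex.I * x - Complex.I * (x : ℂ) ^ 3 * t) / (1 - 3 * (x : ℂ) ^ 2 * t) ^ 2‖
      ≤ (4 * t ^ 2)⁻¹ * x ^ (-4 : ℝ) := by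
  have hx0 : 0 < x := lt_of_lt_of_le (one_div_pos.2 (Real.sqrt_pos.2 ht)) hx
  have hnum : ‖Complex.exp (Complex.I * x - Complex.I * (x : ℂ) ^ 3 * t)‖ = 1 := by
    rw [show Complex.I * x - Complex.I * (x : ℂ) ^ 3 * t = ((x - x ^ 3 * t : ℝ) : ℂ) * Complex.I by
      push_cast; ring, Complex.norm_exp_ofReal_mul_I]
  have hden : 2 * (x ^ 2 * |t|) ≤ ‖1 - 3 * (x : ℂ) ^ 2 * t‖ := by
    have hs : |x ^ 2 * t| = x ^ 2 * |t| := by rw [abs_mul, abs_sq]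
    rw [show 1 - 3 * (x : ℂ) ^ 2 * t = ((1 - 3 * (x ^ 2 * t) : ℝ) : ℂ) by push_cast; ring,
      Complex.norm_real, Real.norm_eq_abs, ← hs]
    exact two_mul_abs_le_abs_one_sub_three_mul (hs ▸ one_le_sq_mul_abs_of_inv_sqrt_le ht hx)
  have hden_sq : 4 * t ^ 2 * x ^ 4 ≤ ‖(1 - 3 * (x : ℂ) ^ 2 * t) ^ 2‖ := by
    rw [norm_pow]
    calc 4 * t ^ 2 * x ^ 4 = (2 * (x ^ 2 * |t|)) ^ 2 := by rw [mul_pow, mul_pow, sq_abs]; ring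
      _ ≤ _ := pow_le_pow_left₀ (by positivity) hden 2
  rw [norm_div, hnum, Real.rpow_neg hx0.le, show (4 : ℝ) = (4 : ℕ) by norm_num,
    Real.rpow_natCast, ← mul_inv, one_div]
  exact inv_anti₀ (by have := abs_pos.mp ht; positivity) hden_sq

theorem inv_sqrt_rpow_neg_three {u : ℝ} (hu : 0 ≤ u) :
    (1 / Real.sqrt u) ^ (-3 : ℝ) = u * Real.sqrt u := by
  rw [one_div, Real.inv_rpow (Real.sqrt_nonneg u), Real.rpow_neg (Real.sqrt_nonneg u), inv_inv,
    show (3 : ℝ) = (3 : ℕ) by norm_num, Real.rpow_natCast, pow_succ, Real.sq_sqrt hu]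

theorem stmt_18_general (t : ℝ) (h1 : 0 < |t|) :
    IntegrableOn (fun lam : ℝ =>
        Complex.exp (Complex.I * lam - Complex.I * (lam : ℂ) ^ 3 * t)
          / (1 - 3 * (lam : ℂ) ^ 2 * t) ^ 2)
      (Set.Ici (1 / Real.sqrt |t|)) ∧
    ‖6 * Complex.I * t *
        ∫ lam in Set.Ici (1 / Real.sqrt |t|),
          Complex.exp (Complex.I * lam - Complex.I * (lam : ℂ) ^ 3 * t)
            / (1 - 3 * (lam : ℂ) ^ 2 * t) ^ 2‖
      ≤ (1 / 2) * Real.sqrt |t| := by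
  have ha : 0 < 1 / Real.sqrt |t| := by positivity
  have hbound := fun x (hx : x ∈ Set.Ici (1 / Real.sqrt |t|)) => norm_exp_div_one_sub_sq_le h1 hx
  refine ⟨integrableOn_Ici_of_norm_le_rpow ha (by norm_num)
    (Measurable.aestronglyMeasurable (by fun_prop)) hbound, ?_⟩
  have hI := norm_setIntegral_Ici_le_of_norm_le_rpow ha (by norm_num) hbound
  rw [show (-4 : ℝ) + 1 = -3 by norm_num, inv_sqrt_rpow_neg_three h1.le] at hI
  have hprefactor : ‖6 * Complex.I * (t : ℂ)‖ = 6 * |t| := by simp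
  rw [norm_mul, hprefactor]
  calc 6 * |t| * _ ≤ 6 * |t| * ((4 * t ^ 2)⁻¹ * (-(|t| * Real.sqrt |t|) / -3)) := by gcongr
    _ = (1 / 2) * Real.sqrt |t| := by
        rw [← sq_abs t]; field_simp; ring

/-- for `0 < |t| ≤ 1`, the function `λ ↦ e^{iλ−iλ³t}(1−3λ²t)⁻²` is
Lebesgue integrable on `[1/√|t|, ∞)`, and
`|6it ∫_{1/√|t|}^{∞} e^{iλ−iλ³t}(1−3λ²t)⁻² dλ| ≤ (1/2)√|t|`. -/
theorem stmt_18 (t : ℝ) (h1 : 0 < |t|) (h2 : |t| ≤ 1) :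
    IntegrableOn (fun lam : ℝ =>
        Complex.exp (Complex.I * lam - Complex.I * (lam : ℂ) ^ 3 * t)
          / (1 - 3 * (lam : ℂ) ^ 2 * t) ^ 2)
      (Set.Ici (1 / Real.sqrt |t|)) ∧
    ‖6 * Complex.I * t *
        ∫ lam in Set.Ici (1 / Real.sqrt |t|),
          Complex.exp (Complex.I * lam - Complex.I * (lam : ℂ) ^ 3 * t)
            / (1 - 3 * (lam : ℂ) ^ 2 * t) ^ 2‖
      ≤ (1 / 2) * Real.sqrt |t| :=
  stmt_18_general t h1
end
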